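/- arXiv:2001.06482 — 5 statements merged into one kernel-verified Lean document; each statement's English description precedes it below -/
import Mathlib

section
/- (Theorem 1.) Let x : ℝ → E solve ẋ(t) = A(t) x(t) + f(t, x(t)) + F(t) for t ∈ [t₀, t₁], let W be a fundamental solution of ẋ = A(t)x with ‖W t₀‖ = 1, let p : ℝ → ℝ be continuous with ‖W t‖ = exp(∫_{t₀}^{t} p(s) ds) for all t ∈ [t₀, t₁], and set k(t) = ‖W t‖ · ‖(W t)⁻¹‖. Let Ω₁ ⊆ E contain 0, let l : ℝ → ℝ be continuous and nonnegative with ‖f(t, y)‖ ≤ l(t) ‖y‖ for all t ∈ [t₀, t₁] and all y ∈ Ω₁, and assume x(s) ∈ Ω₁ for all s ∈ [t₀, t₁]. Then for every t ∈ [t₀, t₁]: ‖x(t)‖ ≤ ‖W t‖ · ‖(W t₀)⁻¹ (x t₀)‖ · exp(∫_{t₀}^{t} k(s) l(s) ds) + ∫_{t₀}^{t} exp(∫_{τ}^{t} (p(s) + k(s) l(s)) ds) · k(τ) · ‖F τ‖ dτ. -/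
/-!
With `y = W⁻¹ x` (variation of constants) one has `y' = W⁻¹ (f(t, x) + F)`, hence
`‖y'‖ ≤ k l ‖y‖ + ‖W⁻¹‖ ‖F‖` because `‖x‖ ≤ ‖W‖ ‖y‖`. Gronwall's inequality with variable
coefficients bounds `‖y‖`, and multiplying by `‖W t‖ = ‖W τ‖ exp (∫_τ^t p)` turns
`‖W t‖ ‖W⁻¹ τ‖` into `exp (∫_τ^t p) k τ`.
-/

open Set MeasureTheory intervalIntegral Real

section Primitive

variable {E : Type*} [NormedAddCommGroup E] {g : ℝ → E} {t₀ t₁ : ℝ}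

theorem ContinuousOn.intervalIntegrable_of_mem_Icc (hg : ContinuousOn g (Icc t₀ t₁))
    {a b : ℝ} (ha : a ∈ Icc t₀ t₁) (hb : b ∈ Icc t₀ t₁) : IntervalIntegrable g volume a b :=
  (hg.mono (uIcc_subset_Icc ha hb)).intervalIntegrable

variable [NormedSpace ℝ E]

theorem ContinuousOn.continuousOn_primitive (hg : ContinuousOn g (Icc t₀ t₁)) (ht : t₀ ≤ t₁) :
    ContinuousOn (fun t => ∫ r in t₀..t, g r) (Icc t₀ t₁) := by
  simpa only [uIcc_of_le ht] using
    continuousOn_primitive_interval' (hg.intervalIntegrable_of_Icc ht) left_mem_uIcc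

variable [CompleteSpace E]

theorem ContinuousOn.hasDerivAt_primitive (hg : ContinuousOn g (Icc t₀ t₁)) {s : ℝ}
    (hs : s ∈ Ioo t₀ t₁) : HasDerivAt (fun t => ∫ r in t₀..t, g r) (g s) s :=
  integral_hasDerivAt_right
    (hg.intervalIntegrable_of_mem_Icc (left_mem_Icc.2 (hs.1.trans hs.2).le)
      (Ioo_subset_Icc_self hs))
    (hg.mono Ioo_subset_Icc_self |>.stronglyMeasurableAtFilter isOpen_Ioo s hs)
    (hg.continuousAt (Icc_mem_nhds hs.1 hs.2))

end Primitive

section Gronwall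

variable {t₀ t₁ a : ℝ} {b c u : ℝ → ℝ}

/-- The derivative of this function is `b (u - R) exp (-∫ b) ≤ 0`, where `R` is the right-hand
side of the integral inequality. -/
theorem antitoneOn_gronwall (ht : t₀ ≤ t₁) (hb : ContinuousOn b (Icc t₀ t₁))
    (hc : ContinuousOn c (Icc t₀ t₁)) (hu : ContinuousOn u (Icc t₀ t₁))
    (hb0 : ∀ s ∈ Icc t₀ t₁, 0 ≤ b s)
    (hbound : ∀ t ∈ Icc t₀ t₁, u t ≤ a + ∫ s in t₀..t, (b s * u s + c s)) :
    AntitoneOn (fun t => (a + ∫ s in t₀..t, (b s * u s + c s)) * exp (-∫ s in t₀..t, b s)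
      - ∫ τ in t₀..t, exp (-∫ s in t₀..τ, b s) * c τ) (Icc t₀ t₁) := by
  have hbuc : ContinuousOn (fun s => b s * u s + c s) (Icc t₀ t₁) := (hb.mul hu).add hc
  have hB := hb.continuousOn_primitive ht
  have hcB : ContinuousOn (fun τ => exp (-∫ s in t₀..τ, b s) * c τ) (Icc t₀ t₁) :=
    hB.neg.rexp.mul hc
  refine antitoneOn_of_hasDerivWithinAt_nonpos (convex_Icc t₀ t₁)
    (f' := fun s => (0 + (b s * u s + c s)) * exp (-∫ r in t₀..s, b r)
      + (a + ∫ r in t₀..s, (b r * u r + c r)) * (exp (-∫ r in t₀..s, b r) * -b s)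
      - exp (-∫ r in t₀..s, b r) * c s)
    (((continuousOn_const.add (hbuc.continuousOn_primitive ht)).mul hB.neg.rexp).sub
      (hcB.continuousOn_primitive ht))
    (fun s hs => ?_) (fun s hs => ?_)
  · rw [interior_Icc] at hs
    exact ((((hasDerivAt_const s a).add (hbuc.hasDerivAt_primitive hs)).mul
      (hb.hasDerivAt_primitive hs).neg.exp).sub (hcB.hasDerivAt_primitive hs)).hasDerivWithinAt
  · rw [interior_Icc] at hs
    have hs' := Ioo_subset_Icc_self hs
    have hderiv_nonpos := mul_nonneg (mul_nonneg (hb0 s hs') (sub_nonneg.2 (hbound s hs')))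
      (exp_pos (-∫ r in t₀..s, b r)).le
    linarith

theorem le_mul_exp_integral_add_integral_of_le_integral (ht : t₀ ≤ t₁)
    (hb : ContinuousOn b (Icc t₀ t₁)) (hc : ContinuousOn c (Icc t₀ t₁))
    (hu : ContinuousOn u (Icc t₀ t₁)) (hb0 : ∀ s ∈ Icc t₀ t₁, 0 ≤ b s)
    (hbound : ∀ t ∈ Icc t₀ t₁, u t ≤ a + ∫ s in t₀..t, (b s * u s + c s)) :
    ∀ t ∈ Icc t₀ t₁, u t ≤ a * exp (∫ s in t₀..t, b s)
      + ∫ τ in t₀..t, exp (∫ s in τ..t, b s) * c τ := by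
  intro t ht'
  have hφ := antitoneOn_gronwall ht hb hc hu hb0 hbound (left_mem_Icc.2 ht) ht' ht'.1
  simp only [integral_same, add_zero, neg_zero, exp_zero, mul_one, sub_zero] at hφ
  set B := fun t => ∫ s in t₀..t, b s
  set C := ∫ τ in t₀..t, exp (-B τ) * c τ
  have hshift : ∫ τ in t₀..t, exp (∫ s in τ..t, b s) * c τ = exp (B t) * C := by
    rw [← intervalIntegral.integral_const_mul]
    refine integral_congr fun τ hτ => ?_
    rw [uIcc_of_le ht'.1] at hτ
    have hτ' : τ ∈ Icc t₀ t₁ := ⟨hτ.1, hτ.2.trans ht'.2⟩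
    rw [← integral_interval_sub_left
      (hb.intervalIntegrable_of_mem_Icc (left_mem_Icc.2 ht) ht')
      (hb.intervalIntegrable_of_mem_Icc (left_mem_Icc.2 ht) hτ'), sub_eq_add_neg, exp_add]
    ring
  calc u t ≤ a + ∫ s in t₀..t, (b s * u s + c s) := hbound t ht'
    _ = (a + ∫ s in t₀..t, (b s * u s + c s)) * exp (-B t) * exp (B t) := by
      rw [mul_assoc, ← exp_add, neg_add_cancel, exp_zero, mul_one]
    _ ≤ (a + C) * exp (B t) := by gcongr; linarith
    _ = a * exp (B t) + ∫ τ in t₀..t, exp (∫ s in τ..t, b s) * c τ := by rw [hshift]; ring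

theorem norm_le_mul_exp_integral_add_integral_of_norm_deriv_le {E : Type*}
    [NormedAddCommGroup E] [NormedSpace ℝ E] [CompleteSpace E] {y g : ℝ → E} (ht : t₀ ≤ t₁)
    (hy : ∀ s ∈ Icc t₀ t₁, HasDerivAt y (g s) s) (hg : ContinuousOn g (Icc t₀ t₁))
    (hb : ContinuousOn b (Icc t₀ t₁)) (hc : ContinuousOn c (Icc t₀ t₁))
    (hb0 : ∀ s ∈ Icc t₀ t₁, 0 ≤ b s) (hbound : ∀ s ∈ Icc t₀ t₁, ‖g s‖ ≤ b s * ‖y s‖ + c s) :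
    ∀ t ∈ Icc t₀ t₁, ‖y t‖ ≤ ‖y t₀‖ * exp (∫ s in t₀..t, b s)
      + ∫ τ in t₀..t, exp (∫ s in τ..t, b s) * c τ := by
  have hy_cont : ContinuousOn y (Icc t₀ t₁) := fun s hs =>
    (hy s hs).continuousAt.continuousWithinAt
  refine le_mul_exp_integral_add_integral_of_le_integral ht hb hc hy_cont.norm hb0
    fun t ht' => ?_
  have hsub : uIcc t₀ t ⊆ Icc t₀ t₁ := uIcc_subset_Icc (left_mem_Icc.2 ht) ht'
  have hFTC : y t = y t₀ + ∫ s in t₀..t, g s := by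
    rw [integral_eq_sub_of_hasDerivAt (fun s hs => hy s (hsub hs))
      (hg.mono hsub).intervalIntegrable]
    abel
  calc ‖y t‖ ≤ ‖y t₀‖ + ‖∫ s in t₀..t, g s‖ := by rw [hFTC]; exact norm_add_le _ _
    _ ≤ ‖y t₀‖ + ∫ s in t₀..t, ‖g s‖ := by
      gcongr; exact norm_integral_le_integral_norm ht'.1
    _ ≤ ‖y t₀‖ + ∫ s in t₀..t, (b s * ‖y s‖ + c s) := by
      gcongr
      refine integral_mono_on ht'.1 (hg.mono hsub).norm.intervalIntegrable
        (((hb.mul hy_cont.norm).add hc).mono hsub).intervalIntegrable fun s hs => ?_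
      exact hbound s (hsub (uIcc_of_le ht'.1 ▸ hs))

end Gronwall

theorem exp_integral_mul_exp_integral {p q : ℝ → ℝ} (hp : Continuous p) (hq : Continuous q)
    (t₀ τ t : ℝ) :
    exp (∫ s in t₀..t, p s) * exp (∫ s in τ..t, q s)
      = exp (∫ s in t₀..τ, p s) * exp (∫ s in τ..t, p s + q s) := by
  rw [integral_add (hp.intervalIntegrable _ _) (hq.intervalIntegrable _ _), exp_add,
    ← integral_add_adjacent_intervals (hp.intervalIntegrable t₀ τ) (hp.intervalIntegrable τ t),
    exp_add]
  ring

theorem HasDerivAt.inverse_of_mul_eq_one {R : Type*} [NormedRing R] [NormedAlgebra ℝ R]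
    [CompleteSpace R] {W Winv : ℝ → R} {W' : R} {t : ℝ} (h₁ : ∀ s, W s * Winv s = 1)
    (h₂ : ∀ s, Winv s * W s = 1) (hW : HasDerivAt W W' t) :
    HasDerivAt Winv (-(Winv t * W' * Winv t)) t := by
  let u : ℝ → Rˣ := fun s => ⟨W s, Winv s, h₁ s, h₂ s⟩
  have hWinv : Winv = Ring.inverse ∘ W := funext fun s => (Ring.inverse_unit (u s)).symm
  have := (hasFDerivAt_ringInverse (𝕜 := ℝ) (u t)).comp_hasDerivAt t hW
  rw [← hWinv] at this
  simpa [u] using this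

theorem hasDerivAt_inverse_apply_of_hasDerivAt {E : Type*} [NormedAddCommGroup E]
    [NormedSpace ℝ E] [CompleteSpace E] {A W Winv : ℝ → E →L[ℝ] E} {x : ℝ → E} {v : E} {t : ℝ}
    (h₁ : ∀ s, W s * Winv s = 1) (h₂ : ∀ s, Winv s * W s = 1)
    (hW : HasDerivAt W (A t * W t) t) (hx : HasDerivAt x (A t (x t) + v) t) :
    HasDerivAt (fun s => Winv s (x s)) (Winv t v) t := by
  convert (hW.inverse_of_mul_eq_one h₁ h₂).clm_apply hx using 1
  simp [mul_assoc, h₁]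

theorem norm_le_of_perturbed_linear_ode {E : Type*} [NormedAddCommGroup E] [NormedSpace ℝ E]
    [CompleteSpace E] {A W Winv : ℝ → E →L[ℝ] E} {x g : ℝ → E} {l c : ℝ → ℝ} {t₀ t₁ : ℝ}
    (ht : t₀ ≤ t₁) (h₁ : ∀ s, W s * Winv s = 1) (h₂ : ∀ s, Winv s * W s = 1)
    (hWinv : ContinuousOn Winv (Icc t₀ t₁)) (hW : ∀ s ∈ Icc t₀ t₁, HasDerivAt W (A s * W s) s)
    (hx : ∀ s ∈ Icc t₀ t₁, HasDerivAt x (A s (x s) + g s) s) (hg : ContinuousOn g (Icc t₀ t₁))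
    (hl : ContinuousOn l (Icc t₀ t₁)) (hl0 : ∀ s ∈ Icc t₀ t₁, 0 ≤ l s)
    (hc : ContinuousOn c (Icc t₀ t₁)) (hgle : ∀ s ∈ Icc t₀ t₁, ‖g s‖ ≤ l s * ‖x s‖ + c s) :
    ∀ t ∈ Icc t₀ t₁, ‖x t‖ ≤ ‖W t‖ * (‖Winv t₀ (x t₀)‖
        * exp (∫ s in t₀..t, ‖W s‖ * ‖Winv s‖ * l s)
      + ∫ τ in t₀..t, exp (∫ s in τ..t, ‖W s‖ * ‖Winv s‖ * l s) * (‖Winv τ‖ * c τ)) := by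
  set y := fun s => Winv s (x s)
  have hx_le : ∀ s, ‖x s‖ ≤ ‖W s‖ * ‖y s‖ := fun s => by
    have hxy : W s (y s) = x s := congrArg (· (x s)) (h₁ s)
    exact hxy ▸ (W s).le_opNorm (y s)
  have hW_cont : ContinuousOn W (Icc t₀ t₁) := fun s hs =>
    (hW s hs).continuousAt.continuousWithinAt
  have hbound : ∀ s ∈ Icc t₀ t₁,
      ‖Winv s (g s)‖ ≤ ‖W s‖ * ‖Winv s‖ * l s * ‖y s‖ + ‖Winv s‖ * c s :=
    fun s hs => calc
      ‖Winv s (g s)‖ ≤ ‖Winv s‖ * (l s * (‖W s‖ * ‖y s‖) + c s) := by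
        refine (Winv s).le_opNorm_of_le ((hgle s hs).trans ?_)
        gcongr
        exacts [hl0 s hs, hx_le s]
      _ = ‖W s‖ * ‖Winv s‖ * l s * ‖y s‖ + ‖Winv s‖ * c s := by ring
  intro t ht'
  calc ‖x t‖ ≤ ‖W t‖ * ‖y t‖ := hx_le t
    _ ≤ _ := by
      gcongr
      exact norm_le_mul_exp_integral_add_integral_of_norm_deriv_le
        (b := fun s => ‖W s‖ * ‖Winv s‖ * l s) (c := fun s => ‖Winv s‖ * c s) ht
        (fun s hs => hasDerivAt_inverse_apply_of_hasDerivAt h₁ h₂ (hW s hs) (hx s hs))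
        (hWinv.clm_apply hg) ((hW_cont.norm.mul hWinv.norm).mul hl) (hWinv.norm.mul hc)
        (fun s hs => by have := hl0 s hs; positivity) hbound t ht'

theorem theorem1_solution_norm_bound_general
    {n : ℕ}
    (A : ℝ → (EuclideanSpace ℝ (Fin n) →L[ℝ] EuclideanSpace ℝ (Fin n)))
    (f : ℝ → EuclideanSpace ℝ (Fin n) → EuclideanSpace ℝ (Fin n))
    (hf : Continuous fun q : ℝ × EuclideanSpace ℝ (Fin n) => f q.1 q.2)
    (F : ℝ → EuclideanSpace ℝ (Fin n)) (hF : Continuous F)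
    (W Winv : ℝ → (EuclideanSpace ℝ (Fin n) →L[ℝ] EuclideanSpace ℝ (Fin n)))
    (hWinv₁ : ∀ t, (W t).comp (Winv t) = ContinuousLinearMap.id ℝ (EuclideanSpace ℝ (Fin n)))
    (hWinv₂ : ∀ t, (Winv t).comp (W t) = ContinuousLinearMap.id ℝ (EuclideanSpace ℝ (Fin n)))
    (hWinv_cont : Continuous Winv)
    (hW_deriv : ∀ t, HasDerivAt W ((A t).comp (W t)) t)
    (t₀ t₁ : ℝ) (ht : t₀ ≤ t₁)
    (p : ℝ → ℝ) (hp : Continuous p)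
    (hWp : ∀ t ∈ Set.Icc t₀ t₁, ‖W t‖ = Real.exp (∫ s in t₀..t, p s))
    (k : ℝ → ℝ) (hk : ∀ t, k t = ‖W t‖ * ‖Winv t‖)
    (Ω₁ : Set (EuclideanSpace ℝ (Fin n)))
    (l : ℝ → ℝ) (hl : Continuous l) (hl0 : ∀ t, 0 ≤ l t)
    (hLip : ∀ t ∈ Set.Icc t₀ t₁, ∀ y ∈ Ω₁, ‖f t y‖ ≤ l t * ‖y‖)
    (x : ℝ → EuclideanSpace ℝ (Fin n))
    (hx : ∀ t ∈ Set.Icc t₀ t₁, HasDerivAt x (A t (x t) + f t (x t) + F t) t)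
    (hxΩ : ∀ s ∈ Set.Icc t₀ t₁, x s ∈ Ω₁) :
    ∀ t ∈ Set.Icc t₀ t₁,
      ‖x t‖ ≤ ‖W t‖ * ‖(Winv t₀) (x t₀)‖ * Real.exp (∫ s in t₀..t, k s * l s)
        + ∫ τ in t₀..t, Real.exp (∫ s in τ..t, p s + k s * l s) * k τ * ‖F τ‖ := by
  have hx_cont : ContinuousOn x (Icc t₀ t₁) := fun s hs =>
    (hx s hs).continuousAt.continuousWithinAt
  have hkl : Continuous fun s => k s * l s := by
    have hW_cont : Continuous W :=
      continuous_iff_continuousAt.2 fun s => (hW_deriv s).continuousAt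
    simp only [hk]
    fun_prop
  intro t ht'
  have hx_le := norm_le_of_perturbed_linear_ode (g := fun s => f s (x s) + F s) ht
    hWinv₁ hWinv₂ hWinv_cont.continuousOn (fun s _ => hW_deriv s)
    (fun s hs => by simpa only [add_assoc] using hx s hs)
    ((hf.comp_continuousOn (continuousOn_id.prodMk hx_cont)).add hF.continuousOn)
    hl.continuousOn (fun s _ => hl0 s) hF.norm.continuousOn
    (fun s hs => (norm_add_le _ _).trans (by gcongr; exact hLip s hs _ (hxΩ s hs))) t ht'
  simp only [← hk] at hx_le
  refine hx_le.trans_eq ?_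
  rw [mul_add, ← mul_assoc, ← intervalIntegral.integral_const_mul]
  refine congrArg _ (integral_congr fun τ hτ => ?_)
  rw [uIcc_of_le ht'.1] at hτ
  rw [← mul_assoc, hWp t ht', exp_integral_mul_exp_integral hp hkl,
    ← hWp τ ⟨hτ.1, hτ.2.trans ht'.2⟩, hk τ]
  ring

/-- Theorem 1: bound on the norm of a solution of
`ẋ = A(t)x + f(t,x) + F(t)` on `[t₀, t₁]`, in terms of the fundamental solution `W`
(with inverse family `Winv`), the logarithmic derivative `p` of `‖W‖`, the
running condition number `k`, and a Lipschitz bound `l` for `f` on `Ω₁`. -/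
theorem theorem1_solution_norm_bound
    {n : ℕ} (hn : 1 ≤ n)
    (A : ℝ → (EuclideanSpace ℝ (Fin n) →L[ℝ] EuclideanSpace ℝ (Fin n)))
    (hA : Continuous A)
    (f : ℝ → EuclideanSpace ℝ (Fin n) → EuclideanSpace ℝ (Fin n))
    (hf : Continuous fun q : ℝ × EuclideanSpace ℝ (Fin n) => f q.1 q.2)
    (F : ℝ → EuclideanSpace ℝ (Fin n)) (hF : Continuous F)
    (W Winv : ℝ → (EuclideanSpace ℝ (Fin n) →L[ℝ] EuclideanSpace ℝ (Fin n)))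
    (hWinv₁ : ∀ t, (W t).comp (Winv t) = ContinuousLinearMap.id ℝ (EuclideanSpace ℝ (Fin n)))
    (hWinv₂ : ∀ t, (Winv t).comp (W t) = ContinuousLinearMap.id ℝ (EuclideanSpace ℝ (Fin n)))
    (hWinv_cont : Continuous Winv)
    (hW_deriv : ∀ t, HasDerivAt W ((A t).comp (W t)) t)
    (t₀ t₁ : ℝ) (ht : t₀ ≤ t₁)
    (hWnorm : ‖W t₀‖ = 1)
    (p : ℝ → ℝ) (hp : Continuous p)
    (hWp : ∀ t ∈ Set.Icc t₀ t₁, ‖W t‖ = Real.exp (∫ s in t₀..t, p s))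
    (k : ℝ → ℝ) (hk : ∀ t, k t = ‖W t‖ * ‖Winv t‖)
    (Ω₁ : Set (EuclideanSpace ℝ (Fin n))) (hΩ₁ : (0 : EuclideanSpace ℝ (Fin n)) ∈ Ω₁)
    (l : ℝ → ℝ) (hl : Continuous l) (hl0 : ∀ t, 0 ≤ l t)
    (hLip : ∀ t ∈ Set.Icc t₀ t₁, ∀ y ∈ Ω₁, ‖f t y‖ ≤ l t * ‖y‖)
    (x : ℝ → EuclideanSpace ℝ (Fin n))
    (hx : ∀ t ∈ Set.Icc t₀ t₁, HasDerivAt x (A t (x t) + f t (x t) + F t) t)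
    (hxΩ : ∀ s ∈ Set.Icc t₀ t₁, x s ∈ Ω₁) :
    ∀ t ∈ Set.Icc t₀ t₁,
      ‖x t‖ ≤ ‖W t‖ * ‖(Winv t₀) (x t₀)‖ * Real.exp (∫ s in t₀..t, k s * l s)
        + ∫ τ in t₀..t, Real.exp (∫ s in τ..t, p s + k s * l s) * k τ * ‖F τ‖ :=
  theorem1_solution_norm_bound_general A f hf F hF W Winv hWinv₁ hWinv₂ hWinv_cont hW_deriv t₀ t₁ ht
    p hp hWp k hk Ω₁ l hl hl0 hLip x hx hxΩ
end

section
/- (Corollary 2, forced part.) In the setting of Theorem 1 with Ω₁ = E (global Lipschitz bound ‖f(t,y)‖ ≤ l(t)‖y‖ for all y ∈ E), suppose there are constants ν > 0, k̂ ≥ 1, F̂ ≥ 0 with p(t) + k(t) l(t) ≤ −ν, k(t) ≤ k̂ and ‖F t‖ ≤ F̂ for all t ≥ t₀. Then every solution x of ẋ = A(t)x + f(t,x) + F(t) satisfies ‖x(t)‖ ≤ ‖(W t₀)⁻¹ (x t₀)‖ · exp(−ν (t − t₀)) + (F̂ k̂ / ν)(1 − exp(−ν (t − t₀))) for all t ≥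 t₀; in particular limsup_{t → ∞} ‖x(t)‖ ≤ F̂ k̂ / ν. -/
/-!
Put `y = W⁻¹ x` (variation of constants): then `y' = W⁻¹ (f(t, x) + F)`, and
`‖x‖ ≤ ‖W‖ ‖y‖ = e^{P} ‖y‖ =: v` with `P = ∫_{t₀}^t p`. The upper right Dini derivative of `v` is
at most `p v + ‖W‖ ‖W⁻¹‖ (l ‖x‖ + F̂) ≤ (p + k l) v + k F̂ ≤ -ν v + F̂ k̂`, so Gronwall's comparison
lemma bounds `v` by the solution of `v' = -ν v + F̂ k̂`, which tends to `F̂ k̂ / ν`.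
-/

open Filter Set Real Topology

theorem gronwallBound_neg_eq {δ ν ε : ℝ} (hν : ν ≠ 0) (x : ℝ) :
    gronwallBound δ (-ν) ε x = δ * exp (-ν * x) + ε / ν * (1 - exp (-ν * x)) := by
  rw [gronwallBound_of_K_ne_0 (neg_ne_zero.2 hν), div_neg]
  ring

theorem tendsto_gronwallBound_neg_atTop {δ ν ε : ℝ} (hν : 0 < ν) :
    Tendsto (gronwallBound δ (-ν) ε) atTop (𝓝 (ε / ν)) := by
  have hexp : Tendsto (fun x => exp (-ν * x)) atTop (𝓝 0) :=
    tendsto_exp_atBot.comp (tendsto_id.const_mul_atTop_of_neg (neg_lt_zero.2 hν))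
  have := (hexp.const_mul δ).add (((tendsto_const_nhds (x := (1 : ℝ))).sub hexp).const_mul (ε / ν))
  rw [funext (gronwallBound_neg_eq hν.ne')]
  simpa using this

theorem limsup_le_of_le_gronwallBound {u : ℝ → ℝ} {t₀ δ ν ε : ℝ} (hν : 0 < ν)
    (hu0 : ∀ t, 0 ≤ u t) (hu : ∀ t ≥ t₀, u t ≤ gronwallBound δ (-ν) ε (t - t₀)) :
    limsup u atTop ≤ ε / ν := by
  have hlim : Tendsto (fun t => gronwallBound δ (-ν) ε (t - t₀)) atTop (𝓝 (ε / ν)) :=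
    (tendsto_gronwallBound_neg_atTop hν).comp (tendsto_atTop_add_const_right _ _ tendsto_id)
  calc limsup u atTop ≤ limsup (fun t => gronwallBound δ (-ν) ε (t - t₀)) atTop :=
        limsup_le_limsup (eventually_ge_atTop t₀ |>.mono hu)
          (isCoboundedUnder_le_of_le atTop hu0) hlim.isBoundedUnder_le
    _ = ε / ν := hlim.limsup_eq

theorem HasDerivAt.inverse_of_mul_eq_one_s5 {R : Type*} [NormedRing R] [HasSummableGeomSeries R]
    [NormedAlgebra ℝ R] {u v : ℝ → R} {u' : R} {t : ℝ} (hu : HasDerivAt u u' t)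
    (huv : ∀ s, u s * v s = 1) (hvu : ∀ s, v s * u s = 1) :
    HasDerivAt v (-(v t * u' * v t)) t := by
  let U : ℝ → Rˣ := fun s => ⟨u s, v s, huv s, hvu s⟩
  have hv : Ring.inverse ∘ u = v := funext fun s => Ring.inverse_unit (U s)
  have h := (hasFDerivAt_ringInverse (𝕜 := ℝ) (U t)).comp_hasDerivAt t hu
  simp only [neg_apply, ContinuousLinearMap.mulLeftRight_apply] at h
  rwa [hv] at h

section

variable {E : Type*} [NormedAddCommGroup E] [NormedSpace ℝ E]

theorem eventually_slope_mul_norm_lt {ω : ℝ → ℝ} {y : ℝ → E} {ω' s r : ℝ} {y' : E}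
    (hω : HasDerivWithinAt ω ω' (Ioi s) s) (hy : HasDerivWithinAt y y' (Ioi s) s)
    (hω0 : ∀ᶠ t in 𝓝[>] s, 0 ≤ ω t) (hr : ω' * ‖y s‖ + ω s * ‖y'‖ < r) :
    ∀ᶠ t in 𝓝[>] s, (t - s)⁻¹ * (ω t * ‖y t‖ - ω s * ‖y s‖) < r := by
  have hslope_y := ((hasDerivWithinAt_iff_tendsto_slope' self_notMem_Ioi).1 hy).norm
  have hslope_ω := (hasDerivWithinAt_iff_tendsto_slope' self_notMem_Ioi).1 hω
  have hlim : Tendsto (fun t => ω t * ‖slope y s t‖ + ‖y s‖ * slope ω s t) (𝓝[>] s)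
      (𝓝 (ω s * ‖y'‖ + ‖y s‖ * ω')) :=
    (hω.continuousWithinAt.tendsto.mul hslope_y).add (hslope_ω.const_mul _)
  filter_upwards [hlim.eventually (gt_mem_nhds (by linarith)), self_mem_nhdsWithin, hω0]
    with t hlt (hst : s < t) hωt
  have hinv : 0 ≤ (t - s)⁻¹ := inv_nonneg.2 (sub_nonneg.2 hst.le)
  have hnorm : (t - s)⁻¹ * (‖y t‖ - ‖y s‖) ≤ ‖slope y s t‖ := by
    rw [slope, vsub_eq_sub, norm_smul, Real.norm_of_nonneg hinv]
    exact mul_le_mul_of_nonneg_left (norm_sub_norm_le _ _) hinv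
  calc (t - s)⁻¹ * (ω t * ‖y t‖ - ω s * ‖y s‖)
      = ω t * ((t - s)⁻¹ * (‖y t‖ - ‖y s‖)) + ‖y s‖ * slope ω s t := by
        rw [slope_def_field, div_eq_inv_mul]; ring
    _ ≤ ω t * ‖slope y s t‖ + ‖y s‖ * slope ω s t := by gcongr
    _ < r := hlt

theorem mul_norm_le_gronwallBound {ω ω' : ℝ → ℝ} {y y' : ℝ → E} {a K c : ℝ}
    (hω : ∀ s ≥ a, HasDerivAt ω (ω' s) s) (hω0 : ∀ s ≥ a, 0 ≤ ω s)
    (hy : ∀ s ≥ a, HasDerivAt y (y' s) s)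
    (bound : ∀ s ≥ a, ω' s * ‖y s‖ + ω s * ‖y' s‖ ≤ K * (ω s * ‖y s‖) + c) :
    ∀ t ≥ a, ω t * ‖y t‖ ≤ gronwallBound (ω a * ‖y a‖) K c (t - a) := by
  intro t ht
  refine le_gronwallBound_of_liminf_deriv_right_le
    (f' := fun s => ω' s * ‖y s‖ + ω s * ‖y' s‖)
    (fun s hs => ((hω s hs.1).continuousAt.mul (hy s hs.1).continuousAt.norm).continuousWithinAt)
    (fun s hs r hr => ?_) le_rfl (fun s hs => bound s hs.1) t ⟨ht, le_rfl⟩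
  have hω0' : ∀ᶠ u in 𝓝[>] s, 0 ≤ ω u := by
    filter_upwards [self_mem_nhdsWithin] with u (hu : s < u) using hω0 u (hs.1.trans hu.le)
  exact (eventually_slope_mul_norm_lt (hω s hs.1).hasDerivWithinAt (hy s hs.1).hasDerivWithinAt
    hω0' hr).frequently

theorem hasDerivAt_fundamental_inverse_apply [CompleteSpace E] {A W Winv : ℝ → E →L[ℝ] E}
    {x : ℝ → E} {b : E} {t : ℝ} (hWWinv : ∀ s, (W s).comp (Winv s) = .id ℝ E)
    (hWinvW : ∀ s, (Winv s).comp (W s) = .id ℝ E) (hW : HasDerivAt W ((A t).comp (W t)) t)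
    (hx : HasDerivAt x (A t (x t) + b) t) :
    HasDerivAt (fun s => Winv s (x s)) (Winv t b) t := by
  have hWinv := hW.inverse_of_mul_eq_one_s5 hWWinv hWinvW
  refine (hWinv.clm_apply hx).congr_deriv ?_
  have hid : ∀ v, W t (Winv t v) = v := fun v => congr($(hWWinv t) v)
  simp [hid]

theorem norm_deriv_bound_le_of_decay {W Winv : E →L[ℝ] E} (hW : ∀ v, W (Winv v) = v) {x fx Fx : E}
    {p l ν Fhat khat : ℝ} (hl : 0 ≤ l) (hf : ‖fx‖ ≤ l * ‖x‖) (hF : ‖Fx‖ ≤ Fhat)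
    (hdecay : p + ‖W‖ * ‖Winv‖ * l ≤ -ν) (hk : ‖W‖ * ‖Winv‖ ≤ khat) :
    ‖W‖ * p * ‖Winv x‖ + ‖W‖ * ‖Winv (fx + Fx)‖ ≤ -ν * (‖W‖ * ‖Winv x‖) + Fhat * khat := by
  have hx : ‖x‖ ≤ ‖W‖ * ‖Winv x‖ := by simpa [hW] using (W.le_opNorm (Winv x))
  have hforce : ‖Winv (fx + Fx)‖ ≤ ‖Winv‖ * (l * ‖x‖ + Fhat) :=
    (Winv.le_opNorm _).trans (by gcongr; exact (norm_add_le _ _).trans (add_le_add hf hF))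
  have hFhat : 0 ≤ Fhat := (norm_nonneg _).trans hF
  calc ‖W‖ * p * ‖Winv x‖ + ‖W‖ * ‖Winv (fx + Fx)‖
      ≤ ‖W‖ * p * ‖Winv x‖ + ‖W‖ * ‖Winv‖ * l * ‖x‖ + ‖W‖ * ‖Winv‖ * Fhat := by
        nlinarith [norm_nonneg W]
    _ ≤ ‖W‖ * p * ‖Winv x‖ + ‖W‖ * ‖Winv‖ * l * (‖W‖ * ‖Winv x‖) + khat * Fhat := by
        gcongr
    _ = (p + ‖W‖ * ‖Winv‖ * l) * (‖W‖ * ‖Winv x‖) + Fhat * khat := by ring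
    _ ≤ -ν * (‖W‖ * ‖Winv x‖) + Fhat * khat := by gcongr

end

theorem corollary2_forced_general
    {n : ℕ}
    (A : ℝ → (EuclideanSpace ℝ (Fin n) →L[ℝ] EuclideanSpace ℝ (Fin n)))
    (f : ℝ → EuclideanSpace ℝ (Fin n) → EuclideanSpace ℝ (Fin n))
    (F : ℝ → EuclideanSpace ℝ (Fin n))
    (W Winv : ℝ → (EuclideanSpace ℝ (Fin n) →L[ℝ] EuclideanSpace ℝ (Fin n)))
    (hWinv₁ : ∀ t, (W t).comp (Winv t) = ContinuousLinearMap.id ℝ (EuclideanSpace ℝ (Fin n)))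
    (hWinv₂ : ∀ t, (Winv t).comp (W t) = ContinuousLinearMap.id ℝ (EuclideanSpace ℝ (Fin n)))
    (hW_deriv : ∀ t, HasDerivAt W ((A t).comp (W t)) t)
    (t₀ : ℝ)
    (p : ℝ → ℝ) (hp : Continuous p)
    (hWp : ∀ t ≥ t₀, ‖W t‖ = Real.exp (∫ s in t₀..t, p s))
    (k : ℝ → ℝ) (hk : ∀ t, k t = ‖W t‖ * ‖Winv t‖)
    (l : ℝ → ℝ) (hl0 : ∀ t, 0 ≤ l t)
    (hLip : ∀ t ≥ t₀, ∀ y : EuclideanSpace ℝ (Fin n), ‖f t y‖ ≤ l t * ‖y‖)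
    (ν khat Fhat : ℝ) (hν : 0 < ν)
    (hdecay : ∀ t ≥ t₀, p t + k t * l t ≤ -ν)
    (hkb : ∀ t ≥ t₀, k t ≤ khat)
    (hFb : ∀ t ≥ t₀, ‖F t‖ ≤ Fhat)
    (x : ℝ → EuclideanSpace ℝ (Fin n))
    (hx : ∀ t ≥ t₀, HasDerivAt x (A t (x t) + f t (x t) + F t) t) :
    (∀ t ≥ t₀, ‖x t‖ ≤ ‖(Winv t₀) (x t₀)‖ * Real.exp (-ν * (t - t₀))
        + (Fhat * khat / ν) * (1 - Real.exp (-ν * (t - t₀)))) ∧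
      Filter.limsup (fun t => ‖x t‖) Filter.atTop ≤ Fhat * khat / ν := by
  set y : ℝ → EuclideanSpace ℝ (Fin n) := fun s => Winv s (x s) with hy_def
  set P : ℝ → ℝ := fun t => ∫ s in t₀..t, p s
  have hP : ∀ t, HasDerivAt P (p t) t := fun t => (hp.integral_hasStrictDerivAt t₀ t).hasDerivAt
  have hWP : ∀ t ≥ t₀, ‖W t‖ = exp (P t) := hWp
  have hWWinv : ∀ s v, W s (Winv s v) = v := fun s v => congr($(hWinv₁ s) v)
  have hx_le : ∀ t ≥ t₀, ‖x t‖ ≤ exp (P t) * ‖y t‖ := fun t ht => by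
    simpa only [hy_def, hWWinv, hWP t ht] using (W t).le_opNorm (y t)
  have hy_le := mul_norm_le_gronwallBound (ω := fun t => exp (P t))
    (ω' := fun t => exp (P t) * p t) (y' := fun s => Winv s (f s (x s) + F s))
    (K := -ν) (c := Fhat * khat) (fun s _ => (hP s).exp) (fun s _ => (exp_pos _).le)
    (fun s hs => hasDerivAt_fundamental_inverse_apply hWinv₁ hWinv₂ (hW_deriv s)
      (by simpa only [add_assoc] using hx s hs))
    (fun s hs => by
      simp only [← hWP s hs]
      exact norm_deriv_bound_le_of_decay (hWWinv s) (hl0 s) (hLip s hs _) (hFb s hs)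
        (hk s ▸ hdecay s hs) (hk s ▸ hkb s hs))
  have hP0 : P t₀ = 0 := intervalIntegral.integral_same
  have hmain : ∀ t ≥ t₀, ‖x t‖ ≤ gronwallBound ‖y t₀‖ (-ν) (Fhat * khat) (t - t₀) := by
    intro t ht
    simpa only [hP0, exp_zero, one_mul] using (hx_le t ht).trans (hy_le t ht)
  refine ⟨fun t ht => ?_, limsup_le_of_le_gronwallBound hν (fun _ => norm_nonneg _) hmain⟩
  simpa only [gronwallBound_neg_eq hν.ne'] using hmain t ht

/-- Corollary 2, forced part: if `p(t) + k(t) l(t) ≤ -ν < 0`, `k(t) ≤ k̂` and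
`‖F t‖ ≤ F̂` for all `t ≥ t₀`, then every solution of `ẋ = A(t)x + f(t,x) + F(t)`
satisfies `‖x(t)‖ ≤ ‖(W t₀)⁻¹ x(t₀)‖ e^{-ν(t-t₀)} + (F̂ k̂ / ν)(1 - e^{-ν(t-t₀)})`,
and in particular `limsup_{t→∞} ‖x(t)‖ ≤ F̂ k̂ / ν`. -/
theorem corollary2_forced
    {n : ℕ} (hn : 1 ≤ n)
    (A : ℝ → (EuclideanSpace ℝ (Fin n) →L[ℝ] EuclideanSpace ℝ (Fin n)))
    (hA : Continuous A)
    (f : ℝ → EuclideanSpace ℝ (Fin n) → EuclideanSpace ℝ (Fin n))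
    (hf : Continuous fun q : ℝ × EuclideanSpace ℝ (Fin n) => f q.1 q.2)
    (F : ℝ → EuclideanSpace ℝ (Fin n)) (hF : Continuous F)
    (W Winv : ℝ → (EuclideanSpace ℝ (Fin n) →L[ℝ] EuclideanSpace ℝ (Fin n)))
    (hWinv₁ : ∀ t, (W t).comp (Winv t) = ContinuousLinearMap.id ℝ (EuclideanSpace ℝ (Fin n)))
    (hWinv₂ : ∀ t, (Winv t).comp (W t) = ContinuousLinearMap.id ℝ (EuclideanSpace ℝ (Fin n)))
    (hWinv_cont : Continuous Winv)
    (hW_deriv : ∀ t, HasDerivAt W ((A t).comp (W t)) t)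
    (t₀ : ℝ) (hWnorm : ‖W t₀‖ = 1)
    (p : ℝ → ℝ) (hp : Continuous p)
    (hWp : ∀ t ≥ t₀, ‖W t‖ = Real.exp (∫ s in t₀..t, p s))
    (k : ℝ → ℝ) (hk : ∀ t, k t = ‖W t‖ * ‖Winv t‖)
    (l : ℝ → ℝ) (hl : Continuous l) (hl0 : ∀ t, 0 ≤ l t)
    (hLip : ∀ t ≥ t₀, ∀ y : EuclideanSpace ℝ (Fin n), ‖f t y‖ ≤ l t * ‖y‖)
    (ν khat Fhat : ℝ) (hν : 0 < ν) (hkhat : 1 ≤ khat) (hFhat : 0 ≤ Fhat)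
    (hdecay : ∀ t ≥ t₀, p t + k t * l t ≤ -ν)
    (hkb : ∀ t ≥ t₀, k t ≤ khat)
    (hFb : ∀ t ≥ t₀, ‖F t‖ ≤ Fhat)
    (x : ℝ → EuclideanSpace ℝ (Fin n))
    (hx : ∀ t ≥ t₀, HasDerivAt x (A t (x t) + f t (x t) + F t) t) :
    (∀ t ≥ t₀, ‖x t‖ ≤ ‖(Winv t₀) (x t₀)‖ * Real.exp (-ν * (t - t₀))
        + (Fhat * khat / ν) * (1 - Real.exp (-ν * (t - t₀)))) ∧
      Filter.limsup (fun t => ‖x t‖) Filter.atTop ≤ Fhat * khat / ν :=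
  corollary2_forced_general A f F W Winv hWinv₁ hWinv₂ hW_deriv t₀ p hp hWp k hk l hl0 hLip ν khat
    Fhat hν hdecay hkb hFb x hx
end

section
/- (Corollary 3.) In the setting of Theorem 1 with Ω₁ = E (global Lipschitz bound ‖f(t,y)‖ ≤ l(t)‖y‖ for all y ∈ E) and F ≡ 0, let χ = limsup_{t → ∞} (t − t₀)⁻¹ (∫_{t₀}^{t} k(s) l(s) ds + Real.log ‖W t‖) and suppose χ < 0. Then for every ε ∈ (0, −χ) there exists D > 0 such that every solution x of ẋ = A(t)x + f(t,x) satisfies ‖x(t)‖ ≤ D · ‖(W t₀)⁻¹ (x t₀)‖ · exp((χ + ε)(t − t₀)) for all t ≥ t₀; in particular x(t) → 0 as t → ∞, so the trivial solution is asymptotically stable. -/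
/-!
Variation of constants: for a solution `x`, the function `y t = W(t)⁻¹ x(t)` satisfies
`ẏ = W(t)⁻¹ f(t, x)`, whose norm is at most `k(t) l(t) ‖y(t)‖`. Grönwall's inequality gives
`‖x(t)‖ ≤ ‖W t‖ ‖y(t₀)‖ exp (∫_{t₀}^t k l) ≤ ‖y(t₀)‖ exp (∫_{t₀}^t k l + log ‖W t‖)`. By definition
of `χ` the exponent is eventually below `(χ + ε)(t - t₀)`; on the remaining compact interval the
bound is absorbed into the constant `D`.
-/

open Set Filter Real Topology

theorem norm_le_mul_exp_integral_of_norm_deriv_le {E : Type*} [NormedAddCommGroup E]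
    [NormedSpace ℝ E] {y y' : ℝ → E} {c : ℝ → ℝ} (hc : Continuous c) {a b : ℝ} (hab : a ≤ b)
    (hy : ∀ t ∈ Icc a b, HasDerivAt y (y' t) t)
    (bound : ∀ t ∈ Icc a b, ‖y' t‖ ≤ c t * ‖y t‖) :
    ‖y b‖ ≤ ‖y a‖ * exp (∫ s in a..b, c s) := by
  set B : ℝ → ℝ → ℝ := fun η t => (‖y a‖ + η) * exp ((∫ s in a..t, c s) + η * (t - a))
  -- `B η` is a strict upper fence for `‖y‖`: it grows at rate `c + η`, faster than `y` can.
  have fence : ∀ η > (0 : ℝ), ‖y b‖ ≤ B η b := by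
    intro η hη
    have hB : ∀ t, HasDerivAt (B η) (B η t * (c t + η)) t := by
      intro t
      have hexp : HasDerivAt (fun u => (∫ s in a..u, c s) + η * (u - a)) (c t + η) t := by
        simpa using (hc.integral_hasStrictDerivAt a t).hasDerivAt.fun_add
          (((hasDerivAt_id t).sub_const a).const_mul η)
      exact (hexp.exp.const_mul _).congr_deriv (by simp only [B]; ring)
    refine image_norm_le_of_norm_deriv_right_lt_deriv_boundary
      (fun t ht => (hy t ht).continuousAt.continuousWithinAt)
      (fun t ht => (hy t (Ico_subset_Icc_self ht)).hasDerivWithinAt)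
      (by simp [B]; linarith) hB (fun t ht hyt => ?_) (right_mem_Icc.2 hab)
    have hBpos : 0 < B η t := by positivity
    calc ‖y' t‖ ≤ c t * B η t := hyt ▸ bound t (Ico_subset_Icc_self ht)
      _ < B η t * (c t + η) := by nlinarith
  have hlim : Tendsto (fun η => B η b) (𝓝[>] 0) (𝓝 (B 0 b)) :=
    ((by fun_prop : Continuous fun η => B η b).tendsto 0).mono_left nhdsWithin_le_nhds
  simpa [B] using ge_of_tendsto hlim (eventually_nhdsWithin_of_forall fence)

theorem hasDerivAt_of_mul_eq_one {R : Type*} [NormedRing R] [HasSummableGeomSeries R]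
    [NormedAlgebra ℝ R] {W Winv : ℝ → R} {W' : R} {t : ℝ} (hW : HasDerivAt W W' t)
    (h₁ : ∀ s, W s * Winv s = 1) (h₂ : ∀ s, Winv s * W s = 1) :
    HasDerivAt Winv (-(Winv t * W' * Winv t)) t := by
  have hinv : Ring.inverse ∘ W = Winv :=
    funext fun s => Ring.inverse_unit ⟨W s, Winv s, h₁ s, h₂ s⟩
  simpa [hinv] using
    (hasFDerivAt_ringInverse (𝕜 := ℝ) ⟨W t, Winv t, h₁ t, h₂ t⟩).comp_hasDerivAt t hW

section FundamentalSolution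

variable {E : Type*} [NormedAddCommGroup E] [NormedSpace ℝ E] [CompleteSpace E]
  {A W Winv : ℝ → E →L[ℝ] E} (hW : ∀ t, HasDerivAt W ((A t).comp (W t)) t)
  (h₁ : ∀ t, (W t).comp (Winv t) = .id ℝ E) (h₂ : ∀ t, (Winv t).comp (W t) = .id ℝ E)
include hW h₁ h₂

theorem hasDerivAt_inverse_fundamental (t : ℝ) : HasDerivAt Winv (-(Winv t).comp (A t)) t := by
  refine (hasDerivAt_of_mul_eq_one (hW t) h₁ h₂).congr_deriv ?_
  simp only [ContinuousLinearMap.mul_def, ContinuousLinearMap.comp_assoc, h₁ t,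
    ContinuousLinearMap.comp_id]

theorem hasDerivAt_inverse_fundamental_apply {x : ℝ → E} {b : E} {t : ℝ}
    (hx : HasDerivAt x (A t (x t) + b) t) :
    HasDerivAt (fun s => Winv s (x s)) (Winv t b) t := by
  refine ((hasDerivAt_inverse_fundamental hW h₁ h₂ t).clm_apply hx).congr_deriv ?_
  simp only [neg_apply, ContinuousLinearMap.comp_apply, map_add]
  abel

theorem continuous_norm_mul_norm_inverse_fundamental : Continuous fun t => ‖W t‖ * ‖Winv t‖ :=
  (continuous_iff_continuousAt.2 fun t => (hW t).continuousAt).norm.mul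
    (continuous_iff_continuousAt.2 fun t =>
      (hasDerivAt_inverse_fundamental hW h₁ h₂ t).continuousAt).norm

theorem norm_le_of_hasDerivAt_fundamental {f : ℝ → E → E} {l : ℝ → ℝ} (hl : Continuous l)
    (hl0 : ∀ t, 0 ≤ l t) {x : ℝ → E} {t₀ t : ℝ} (ht : t₀ ≤ t)
    (hx : ∀ s ∈ Icc t₀ t, HasDerivAt x (A s (x s) + f s (x s)) s)
    (hf : ∀ s ∈ Icc t₀ t, ‖f s (x s)‖ ≤ l s * ‖x s‖) :
    ‖x t‖ ≤ ‖W t‖ * ‖Winv t₀ (x t₀)‖ * exp (∫ s in t₀..t, ‖W s‖ * ‖Winv s‖ * l s) := by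
  have hWW : ∀ s, W s (Winv s (x s)) = x s := fun s => congr($(h₁ s) (x s))
  have hx_le : ∀ s, ‖x s‖ ≤ ‖W s‖ * ‖Winv s (x s)‖ := fun s => by
    simpa only [hWW] using (W s).le_opNorm (Winv s (x s))
  have gronwall := norm_le_mul_exp_integral_of_norm_deriv_le
    (c := fun s => ‖W s‖ * ‖Winv s‖ * l s)
    ((continuous_norm_mul_norm_inverse_fundamental hW h₁ h₂).mul hl) ht
    (fun s hs => hasDerivAt_inverse_fundamental_apply hW h₁ h₂ (hx s hs)) fun s hs => calc
      ‖Winv s (f s (x s))‖ ≤ ‖Winv s‖ * (l s * ‖x s‖) :=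
        (Winv s).le_of_opNorm_le_of_le le_rfl (hf s hs)
      _ ≤ ‖Winv s‖ * (l s * (‖W s‖ * ‖Winv s (x s)‖)) := by gcongr; exacts [hl0 s, hx_le s]
      _ = ‖W s‖ * ‖Winv s‖ * l s * ‖Winv s (x s)‖ := by ring
  calc ‖x t‖ ≤ ‖W t‖ * ‖Winv t (x t)‖ := hx_le t
    _ ≤ _ := by rw [mul_assoc]; gcongr

end FundamentalSolution

theorem exists_pos_le_mul_exp_of_limsup_lt {F u : ℝ → ℝ} {t₀ μ : ℝ}
    (hF : ContinuousOn F (Ici t₀)) (hFu : ∀ t ≥ t₀, F t ≤ exp (u t))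
    (hbdd : IsBoundedUnder (· ≤ ·) atTop fun t => (t - t₀)⁻¹ * u t)
    (hμ : limsup (fun t => (t - t₀)⁻¹ * u t) atTop < μ) :
    ∃ D > 0, ∀ t ≥ t₀, F t ≤ D * exp (μ * (t - t₀)) := by
  obtain ⟨T, hT⟩ := eventually_atTop.1 (eventually_lt_of_limsup_lt hμ hbdd)
  set T' := max T (t₀ + 1)
  have hT' : t₀ ≤ T' := by simp [T']
  obtain ⟨C, hC⟩ := isCompact_Icc.exists_bound_of_continuousOn
    (f := fun t => F t * exp (-(μ * (t - t₀)))) ((hF.mono Icc_subset_Ici_self).mul (by fun_prop))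
  refine ⟨max C 1, by positivity, fun t ht => ?_⟩
  rcases le_total t T' with htT | htT
  · have hbound := (le_abs_self _).trans (hC t ⟨ht, htT⟩)
    calc F t = F t * exp (-(μ * (t - t₀))) * exp (μ * (t - t₀)) := by
          rw [mul_assoc, ← exp_add, neg_add_cancel, exp_zero, mul_one]
      _ ≤ max C 1 * exp (μ * (t - t₀)) := by gcongr; exact hbound.trans (le_max_left _ _)
  · have hpos : 0 < t - t₀ := by linarith [le_max_right T (t₀ + 1)]
    have hu : u t < μ * (t - t₀) := by
      have := hT t (le_trans (le_max_left _ _) htT)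
      rwa [inv_mul_lt_iff₀ hpos, mul_comm] at this
    calc F t ≤ exp (u t) := hFu t ht
      _ ≤ 1 * exp (μ * (t - t₀)) := by rw [one_mul]; exact exp_le_exp.2 hu.le
      _ ≤ max C 1 * exp (μ * (t - t₀)) := by gcongr; exact le_max_right _ _

theorem tendsto_zero_of_norm_le_mul_exp {E : Type*} [SeminormedAddCommGroup E] {x : ℝ → E}
    {C μ t₀ : ℝ} (hμ : μ < 0) (hx : ∀ t ≥ t₀, ‖x t‖ ≤ C * exp (μ * (t - t₀))) :
    Tendsto x atTop (𝓝 0) := by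
  refine squeeze_zero_norm' (eventually_atTop.2 ⟨t₀, hx⟩) ?_
  have : Tendsto (fun t => μ * (t - t₀)) atTop atBot :=
    (tendsto_atTop_add_const_right _ _ tendsto_id).const_mul_atTop_of_neg hμ
  simpa using (tendsto_exp_atBot.comp this).const_mul C

theorem corollary3_asymptotic_stability_general
    {n : ℕ}
    (A : ℝ → (EuclideanSpace ℝ (Fin n) →L[ℝ] EuclideanSpace ℝ (Fin n)))
    (f : ℝ → EuclideanSpace ℝ (Fin n) → EuclideanSpace ℝ (Fin n))
    (W Winv : ℝ → (EuclideanSpace ℝ (Fin n) →L[ℝ] EuclideanSpace ℝ (Fin n)))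
    (hWinv₁ : ∀ t, (W t).comp (Winv t) = ContinuousLinearMap.id ℝ (EuclideanSpace ℝ (Fin n)))
    (hWinv₂ : ∀ t, (Winv t).comp (W t) = ContinuousLinearMap.id ℝ (EuclideanSpace ℝ (Fin n)))
    (hW_deriv : ∀ t, HasDerivAt W ((A t).comp (W t)) t)
    (t₀ : ℝ)
    (k : ℝ → ℝ) (hk : ∀ t, k t = ‖W t‖ * ‖Winv t‖)
    (l : ℝ → ℝ) (hl : Continuous l) (hl0 : ∀ t, 0 ≤ l t)
    (hLip : ∀ t ≥ t₀, ∀ y : EuclideanSpace ℝ (Fin n), ‖f t y‖ ≤ l t * ‖y‖)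
    (χ : ℝ)
    (hχdef : χ = Filter.limsup
      (fun t => (t - t₀)⁻¹ * ((∫ s in t₀..t, k s * l s) + Real.log ‖W t‖)) Filter.atTop)
    (hχ : χ < 0) :
    (∀ ε ∈ Set.Ioo (0 : ℝ) (-χ), ∃ D > (0 : ℝ),
        ∀ x : ℝ → EuclideanSpace ℝ (Fin n),
          (∀ t ≥ t₀, HasDerivAt x (A t (x t) + f t (x t)) t) →
          ∀ t ≥ t₀,
            ‖x t‖ ≤ D * ‖(Winv t₀) (x t₀)‖ * Real.exp ((χ + ε) * (t - t₀))) ∧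
      ∀ x : ℝ → EuclideanSpace ℝ (Fin n),
        (∀ t ≥ t₀, HasDerivAt x (A t (x t) + f t (x t)) t) →
        Filter.Tendsto x Filter.atTop (nhds 0) := by
  obtain rfl : k = fun t => ‖W t‖ * ‖Winv t‖ := funext hk
  set φ : ℝ → ℝ := fun t => ∫ s in t₀..t, ‖W s‖ * ‖Winv s‖ * l s
  have hsol : ∀ x : ℝ → EuclideanSpace ℝ (Fin n),
      (∀ t ≥ t₀, HasDerivAt x (A t (x t) + f t (x t)) t) →
      ∀ t ≥ t₀, ‖x t‖ ≤ ‖Winv t₀ (x t₀)‖ * (‖W t‖ * exp (φ t)) := fun x hx t ht =>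
    (norm_le_of_hasDerivAt_fundamental hW_deriv hWinv₁ hWinv₂ hl hl0 ht
      (fun s hs => hx s hs.1) fun s hs => hLip s hs.1 _).trans_eq (by ring)
  have hW_cont : Continuous W :=
    continuous_iff_continuousAt.2 fun t => (hW_deriv t).continuousAt
  have hφ_cont : Continuous φ := intervalIntegral.continuous_primitive (fun _ _ =>
    ((continuous_norm_mul_norm_inverse_fundamental hW_deriv hWinv₁ hWinv₂).mul
      hl).intervalIntegrable _ _) t₀
  -- an unbounded limsup would be the junk value `0`, contradicting `χ < 0`
  have hbdd : IsBoundedUnder (· ≤ ·) atTop fun t => (t - t₀)⁻¹ * (φ t + log ‖W t‖) := by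
    by_contra h
    rw [Real.limsup_of_not_isBoundedUnder h] at hχdef
    linarith
  have hdecay : ∀ ε ∈ Ioo (0 : ℝ) (-χ), ∃ D > (0 : ℝ),
      ∀ x : ℝ → EuclideanSpace ℝ (Fin n), (∀ t ≥ t₀, HasDerivAt x (A t (x t) + f t (x t)) t) →
        ∀ t ≥ t₀, ‖x t‖ ≤ D * ‖(Winv t₀) (x t₀)‖ * exp ((χ + ε) * (t - t₀)) := by
    rintro ε ⟨hε, -⟩
    obtain ⟨D, hD, hF⟩ := exists_pos_le_mul_exp_of_limsup_lt
      (F := fun t => ‖W t‖ * exp (φ t)) (μ := χ + ε) (hW_cont.norm.mul hφ_cont.rexp).continuousOn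
      (fun t _ => by rw [add_comm, exp_add]; gcongr; exact le_exp_log _) hbdd
      (by rw [← hχdef]; linarith)
    refine ⟨D, hD, fun x hx t ht => (hsol x hx t ht).trans ?_⟩
    rw [mul_comm D, mul_assoc]
    exact mul_le_mul_of_nonneg_left (hF t ht) (norm_nonneg _)
  refine ⟨hdecay, fun x hx => ?_⟩
  obtain ⟨D, -, hD⟩ := hdecay (-χ / 2) ⟨by linarith, by linarith⟩
  exact tendsto_zero_of_norm_le_mul_exp (by linarith) (hD x hx)

/-- Corollary 3: if the characteristic exponent
`χ = limsup_{t→∞} (t-t₀)⁻¹ (∫_{t₀}^t k l + log ‖W t‖)` is negative, then for every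
`ε ∈ (0, -χ)` there is `D > 0` such that every solution of `ẋ = A(t)x + f(t,x)`
satisfies `‖x(t)‖ ≤ D ‖(W t₀)⁻¹ x(t₀)‖ e^{(χ+ε)(t-t₀)}` for `t ≥ t₀`; in particular
every solution tends to `0`. -/
theorem corollary3_asymptotic_stability
    {n : ℕ} (hn : 1 ≤ n)
    (A : ℝ → (EuclideanSpace ℝ (Fin n) →L[ℝ] EuclideanSpace ℝ (Fin n)))
    (hA : Continuous A)
    (f : ℝ → EuclideanSpace ℝ (Fin n) → EuclideanSpace ℝ (Fin n))
    (hf : Continuous fun q : ℝ × EuclideanSpace ℝ (Fin n) => f q.1 q.2)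
    (W Winv : ℝ → (EuclideanSpace ℝ (Fin n) →L[ℝ] EuclideanSpace ℝ (Fin n)))
    (hWinv₁ : ∀ t, (W t).comp (Winv t) = ContinuousLinearMap.id ℝ (EuclideanSpace ℝ (Fin n)))
    (hWinv₂ : ∀ t, (Winv t).comp (W t) = ContinuousLinearMap.id ℝ (EuclideanSpace ℝ (Fin n)))
    (hWinv_cont : Continuous Winv)
    (hW_deriv : ∀ t, HasDerivAt W ((A t).comp (W t)) t)
    (t₀ : ℝ) (hWnorm : ‖W t₀‖ = 1)
    (k : ℝ → ℝ) (hk : ∀ t, k t = ‖W t‖ * ‖Winv t‖)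
    (l : ℝ → ℝ) (hl : Continuous l) (hl0 : ∀ t, 0 ≤ l t)
    (hLip : ∀ t ≥ t₀, ∀ y : EuclideanSpace ℝ (Fin n), ‖f t y‖ ≤ l t * ‖y‖)
    (χ : ℝ)
    (hχdef : χ = Filter.limsup
      (fun t => (t - t₀)⁻¹ * ((∫ s in t₀..t, k s * l s) + Real.log ‖W t‖)) Filter.atTop)
    (hχ : χ < 0) :
    (∀ ε ∈ Set.Ioo (0 : ℝ) (-χ), ∃ D > (0 : ℝ),
        ∀ x : ℝ → EuclideanSpace ℝ (Fin n),
          (∀ t ≥ t₀, HasDerivAt x (A t (x t) + f t (x t)) t) →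
          ∀ t ≥ t₀,
            ‖x t‖ ≤ D * ‖(Winv t₀) (x t₀)‖ * Real.exp ((χ + ε) * (t - t₀))) ∧
      ∀ x : ℝ → EuclideanSpace ℝ (Fin n),
        (∀ t ≥ t₀, HasDerivAt x (A t (x t) + f t (x t)) t) →
        Filter.Tendsto x Filter.atTop (nhds 0) :=
  corollary3_asymptotic_stability_general A f W Winv hWinv₁ hWinv₂ hW_deriv t₀ k hk l hl hl0 hLip χ
    hχdef hχ
end

section
/- (Theorem 3, stable fixed point.) In the extended-Lipschitz setting with F ≡ 0 and with p̂ < 0, k̂ ≥ 1, L̂ as above (p(t) ≤ p̂, 1 ≤ k(t) ≤ k̂, L(t, X) ≤ L̂(X)), define Q(X) = p̂ X + k̂ L̂(X) and suppose d > 0 satisfies Q(d) = 0, Q(X) > 0 for all X ∈ (0, d), and Q(X) < 0 for all X > d. Then every solution x of ẋ = A(t)x + f(t,x) with ‖(W t₀)⁻¹ (x t₀)‖ ≤ d satisfies ‖x(t)‖ ≤ d for all t ≥ t₀, and every solution (regardless of initial condition) satisfies limsup_{t → ∞} ‖x(t)‖ ≤ d. -/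
/-!
Put `y = W⁻¹ x` and `E(t) = exp ∫_{t₀}^t p = ‖W t‖`. Variation of constants gives
`y' = W⁻¹ f(t, x)`, so `u = E ‖y‖` dominates `‖x‖ = ‖W y‖` and its lower right Dini derivative is
at most `p u + ‖W‖ ‖W⁻¹‖ ‖f(t, x)‖ ≤ p̂ u + k̂ L̂(u) = Q(u)`. A barrier `B` with `Q(B) < B'` is never
crossed by `u`: constant barriers `C > d` give invariance of `[0, d]`, and a barrier falling
linearly from `max(u(t₀), d')` to any `d' > d` (with slope half the minimum of `-Q` on that
range) forces `u ≤ d'` eventually.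
-/

open Set Filter Topology Real

/-- `liminf_{z → τ⁺} slope u τ z ≤ m`, in the form taken by
`image_le_of_liminf_slope_right_lt_deriv_boundary'`. -/
def LiminfSlopeRightLE (u : ℝ → ℝ) (τ m : ℝ) : Prop :=
  ∀ r, m < r → ∃ᶠ z in 𝓝[>] τ, slope u τ z < r

theorem LiminfSlopeRightLE.mono {u : ℝ → ℝ} {τ m m' : ℝ} (h : LiminfSlopeRightLE u τ m)
    (hm : m ≤ m') : LiminfSlopeRightLE u τ m' :=
  fun r hr => h r (hm.trans_lt hr)

theorem liminfSlopeRightLE_mul_norm {V : Type*} [NormedAddCommGroup V] [NormedSpace ℝ V]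
    {E : ℝ → ℝ} {y : ℝ → V} {τ E' : ℝ} {y' : V}
    (hE : HasDerivAt E E' τ) (hE0 : ∀ z, 0 ≤ E z) (hy : HasDerivAt y y' τ) :
    LiminfSlopeRightLE (fun z => E z * ‖y z‖) τ (‖y τ‖ * E' + E τ * ‖y'‖) := by
  intro r hr
  have hright : 𝓝[>] τ ≤ 𝓝[≠] τ := nhdsWithin_mono τ fun z hz => ne_of_gt hz
  have hlim : Tendsto (fun z => ‖y τ‖ * slope E τ z + E z * ‖slope y τ z‖) (𝓝[>] τ)
      (𝓝 (‖y τ‖ * E' + E τ * ‖y'‖)) :=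
    (tendsto_const_nhds.mul ((hasDerivAt_iff_tendsto_slope.mp hE).mono_left hright)).add
      ((hE.continuousAt.tendsto.mono_left nhdsWithin_le_nhds).mul
        ((hasDerivAt_iff_tendsto_slope.mp hy).mono_left hright).norm)
  refine Eventually.frequently ?_
  filter_upwards [hlim.eventually_lt_const hr, self_mem_nhdsWithin] with z hz hτz
  refine lt_of_le_of_lt ?_ hz
  have hzτ : 0 < z - τ := sub_pos.mpr hτz
  have hinc : E z * ‖y z‖ - E τ * ‖y τ‖ ≤ ‖y τ‖ * (E z - E τ) + E z * ‖y z - y τ‖ := by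
    nlinarith [norm_sub_norm_le (y z) (y τ), hE0 z]
  rw [slope_def_field, slope_def_field, slope, norm_smul, Real.norm_of_nonneg (inv_pos.2 hzτ).le]
  calc (E z * ‖y z‖ - E τ * ‖y τ‖) / (z - τ)
      ≤ (‖y τ‖ * (E z - E τ) + E z * ‖y z - y τ‖) / (z - τ) := by gcongr
    _ = _ := by rw [vsub_eq_sub]; field_simp

theorem liminfSlopeRightLE_mul_norm_le {V : Type*} [NormedAddCommGroup V] [NormedSpace ℝ V]
    {E : ℝ → ℝ} {y : ℝ → V} {B : V →L[ℝ] V} {w : V} {t q q' κ ℓ : ℝ}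
    (hE : HasDerivAt E (q * E t) t) (hE0 : ∀ z, 0 ≤ E z) (hy : HasDerivAt y (B w) t)
    (hq : q ≤ q') (hB : E t * ‖B‖ ≤ κ) (hw : ‖w‖ ≤ ℓ) :
    LiminfSlopeRightLE (fun z => E z * ‖y z‖) t (q' * (E t * ‖y t‖) + κ * ℓ) := by
  refine (liminfSlopeRightLE_mul_norm hE hE0 hy).mono ?_
  have hlin : ‖y t‖ * (q * E t) ≤ q' * (E t * ‖y t‖) := by
    rw [show ‖y t‖ * (q * E t) = q * (E t * ‖y t‖) by ring]
    exact mul_le_mul_of_nonneg_right hq (mul_nonneg (hE0 t) (norm_nonneg _))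
  have hnonlin : E t * ‖B w‖ ≤ κ * ℓ := calc
    E t * ‖B w‖ ≤ E t * (‖B‖ * ‖w‖) := mul_le_mul_of_nonneg_left (B.le_opNorm w) (hE0 t)
    _ ≤ E t * ‖B‖ * ℓ := by
      rw [← mul_assoc]; exact mul_le_mul_of_nonneg_left hw (mul_nonneg (hE0 t) (norm_nonneg B))
    _ ≤ κ * ℓ := mul_le_mul_of_nonneg_right hB ((norm_nonneg w).trans hw)
  exact add_le_add hlin hnonlin

theorem hasDerivAt_inverse_of_hasDerivAt {R : Type*} [NormedRing R] [NormedAlgebra ℝ R]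
    [HasSummableGeomSeries R] {W Winv : ℝ → R} {a : R} {t : ℝ}
    (hW : HasDerivAt W (a * W t) t) (h₁ : ∀ s, W s * Winv s = 1) (h₂ : ∀ s, Winv s * W s = 1) :
    HasDerivAt Winv (-(Winv t * a)) t := by
  let U : Rˣ := ⟨W t, Winv t, h₁ t, h₂ t⟩
  have hinv : (fun s => Ring.inverse (W s)) = Winv :=
    funext fun s => Ring.inverse_unit ⟨W s, Winv s, h₁ s, h₂ s⟩
  have h := (hasFDerivAt_ringInverse (𝕜 := ℝ) U).comp_hasDerivAt t hW
  rw [Function.comp_def, hinv] at h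
  have hderiv :
      (-ContinuousLinearMap.mulLeftRight ℝ R ↑U⁻¹ ↑U⁻¹) (a * W t) = -(Winv t * a) := by
    simp [U, ContinuousLinearMap.mulLeftRight_apply, mul_assoc, h₁ t]
  rwa [hderiv] at h

theorem hasDerivAt_inverse_apply {V : Type*} [NormedAddCommGroup V] [NormedSpace ℝ V]
    {Winv : ℝ → V →L[ℝ] V} {x : ℝ → V} {a : V →L[ℝ] V} {g : V} {t : ℝ}
    (hWinv : HasDerivAt Winv (-(Winv t * a)) t) (hx : HasDerivAt x (a (x t) + g) t) :
    HasDerivAt (fun s => Winv s (x s)) (Winv t g) t := by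
  simpa using hWinv.clm_apply hx

theorem norm_le_opNorm_mul_norm_apply_of_comp_eq_id {V : Type*} [NormedAddCommGroup V]
    [NormedSpace ℝ V] {W Winv : V →L[ℝ] V} (h : W.comp Winv = ContinuousLinearMap.id ℝ V)
    (v : V) : ‖v‖ ≤ ‖W‖ * ‖Winv v‖ := calc
  ‖v‖ = ‖W (Winv v)‖ := by rw [← ContinuousLinearMap.comp_apply, h]; rfl
  _ ≤ ‖W‖ * ‖Winv v‖ := W.le_opNorm _

section Comparison

variable {u Q : ℝ → ℝ}

theorem le_sub_mul_of_liminfSlopeRightLE {a b C r : ℝ} (hu : ContinuousOn u (Icc a b))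
    (hdini : ∀ τ ∈ Ico a b, LiminfSlopeRightLE u τ (Q (u τ))) (ha : u a ≤ C)
    (hQ : ∀ τ ∈ Ico a b, Q (C - r * (τ - a)) < -r) :
    ∀ t ∈ Icc a b, u t ≤ C - r * (t - a) := by
  refine fun t ht => image_le_of_liminf_slope_right_lt_deriv_boundary' hu hdini
    (B' := fun _ => -r) (by simpa using ha) (by fun_prop) (fun τ _ => ?_)
    (fun τ hτ h => h ▸ hQ τ hτ) ht
  simpa using (((hasDerivAt_id τ).sub_const a).const_mul r).const_sub C |>.hasDerivWithinAt

theorem le_of_liminfSlopeRightLE_of_neg {a C : ℝ} (hu : ContinuousOn u (Ici a))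
    (hdini : ∀ τ ≥ a, LiminfSlopeRightLE u τ (Q (u τ))) (ha : u a ≤ C) (hC : Q C < 0) :
    ∀ t ≥ a, u t ≤ C := fun t ht => by
  simpa using le_sub_mul_of_liminfSlopeRightLE (r := 0) (hu.mono Icc_subset_Ici_self)
    (fun τ hτ => hdini τ hτ.1) ha (fun _ _ => by simpa using hC) t ⟨ht, le_rfl⟩

theorem le_of_liminfSlopeRightLE_of_neg_on_Ioi {a d : ℝ} (hu : ContinuousOn u (Ici a))
    (hdini : ∀ τ ≥ a, LiminfSlopeRightLE u τ (Q (u τ))) (hQ : ∀ X > d, Q X < 0)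
    (ha : u a ≤ d) : ∀ t ≥ a, u t ≤ d := fun t ht =>
  le_of_forall_gt_imp_ge_of_dense fun C hC =>
    le_of_liminfSlopeRightLE_of_neg hu hdini (ha.trans hC.le) (hQ C hC) t ht

theorem eventually_le_of_liminfSlopeRightLE {a d d' : ℝ} (hu : ContinuousOn u (Ici a))
    (hdini : ∀ τ ≥ a, LiminfSlopeRightLE u τ (Q (u τ))) (hQc : Continuous Q)
    (hQ : ∀ X > d, Q X < 0) (hd' : d < d') : ∀ᶠ t in atTop, u t ≤ d' := by
  set M := max (u a) d'
  obtain ⟨ε, hε, hQε⟩ : ∃ ε > 0, ∀ X ∈ Icc d' M, Q X ≤ -ε := by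
    obtain ⟨X₀, hX₀, hmax⟩ := isCompact_Icc.exists_isMaxOn
      (nonempty_Icc.2 (le_max_right (u a) d')) hQc.continuousOn
    exact ⟨-Q X₀, neg_pos.2 (hQ X₀ (hd'.trans_le hX₀.1)), fun X hX => by simpa using hmax hX⟩
  -- the barrier `M - (ε / 2) (t - a)` comes down to `d'` at time `T`
  set T := a + 2 * (M - d') / ε
  have hMd' : 0 ≤ M - d' := sub_nonneg.2 (le_max_right _ _)
  have haT : a ≤ T := le_add_of_nonneg_right (by positivity)
  have hbarrier : ∀ τ, M - ε / 2 * (τ - a) = d' + ε / 2 * (T - τ) := fun τ => by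
    simp only [T]; field_simp; ring
  have huT : u T ≤ d' := by
    have h := le_sub_mul_of_liminfSlopeRightLE (r := ε / 2) (hu.mono Icc_subset_Ici_self)
      (fun τ hτ => hdini τ hτ.1) (le_max_left (u a) d') (fun τ hτ => ?_) T ⟨haT, le_rfl⟩
    · rwa [hbarrier, sub_self, mul_zero, add_zero] at h
    refine (hQε _ ⟨?_, ?_⟩).trans_lt (by linarith)
    · rw [hbarrier]; nlinarith [hτ.2]
    · nlinarith [hτ.1]
  filter_upwards [eventually_ge_atTop T] with t ht
  exact le_of_liminfSlopeRightLE_of_neg (hu.mono (Ici_subset_Ici.2 haT))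
    (fun τ hτ => hdini τ (haT.trans hτ)) huT (hQ d' hd') t ht

end Comparison

theorem theorem3_stable_fixed_point_general
    {n : ℕ}
    (A : ℝ → (EuclideanSpace ℝ (Fin n) →L[ℝ] EuclideanSpace ℝ (Fin n)))
    (f : ℝ → EuclideanSpace ℝ (Fin n) → EuclideanSpace ℝ (Fin n))
    (W Winv : ℝ → (EuclideanSpace ℝ (Fin n) →L[ℝ] EuclideanSpace ℝ (Fin n)))
    (hWinv₁ : ∀ t, (W t).comp (Winv t) = ContinuousLinearMap.id ℝ (EuclideanSpace ℝ (Fin n)))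
    (hWinv₂ : ∀ t, (Winv t).comp (W t) = ContinuousLinearMap.id ℝ (EuclideanSpace ℝ (Fin n)))
    (hW_deriv : ∀ t, HasDerivAt W ((A t).comp (W t)) t)
    (t₀ : ℝ)
    (p : ℝ → ℝ) (hp : Continuous p)
    (hWp : ∀ t ≥ t₀, ‖W t‖ = Real.exp (∫ s in t₀..t, p s))
    (k : ℝ → ℝ) (hk : ∀ t, k t = ‖W t‖ * ‖Winv t‖)
    -- extended-Lipschitz setting
    (L : ℝ → ℝ → ℝ)
    (hfL : ∀ t ≥ t₀, ∀ y : EuclideanSpace ℝ (Fin n), ‖f t y‖ ≤ L t ‖y‖)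
    -- bounds by constants and an autonomous majorant
    (phat khat : ℝ)
    (Lhat : ℝ → ℝ) (hLhat_cont : Continuous Lhat) (hLhat_mono : Monotone Lhat)
    (hpb : ∀ t ≥ t₀, p t ≤ phat)
    (hkb : ∀ t ≥ t₀, 1 ≤ k t ∧ k t ≤ khat)
    (hLb : ∀ t ≥ t₀, ∀ X ≥ (0 : ℝ), L t X ≤ Lhat X)
    (Q : ℝ → ℝ) (hQdef : ∀ X, Q X = phat * X + khat * Lhat X)
    (d : ℝ)
    (hQneg : ∀ X > d, Q X < 0) :
    (∀ x : ℝ → EuclideanSpace ℝ (Fin n),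
        (∀ t ≥ t₀, HasDerivAt x (A t (x t) + f t (x t)) t) →
        ‖(Winv t₀) (x t₀)‖ ≤ d →
        ∀ t ≥ t₀, ‖x t‖ ≤ d) ∧
      ∀ x : ℝ → EuclideanSpace ℝ (Fin n),
        (∀ t ≥ t₀, HasDerivAt x (A t (x t) + f t (x t)) t) →
        Filter.limsup (fun t => ‖x t‖) Filter.atTop ≤ d := by
  set E : ℝ → ℝ := fun t => exp (∫ s in t₀..t, p s)
  have hE : ∀ t, HasDerivAt E (p t * E t) t := fun t => by
    simpa [mul_comm] using (intervalIntegral.integral_hasDerivAt_right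
      (hp.intervalIntegrable _ _) (hp.stronglyMeasurableAtFilter _ _) hp.continuousAt).exp
  have hWE : ∀ t ≥ t₀, ‖W t‖ = E t := hWp
  have hQ : Continuous Q := by rw [funext hQdef]; fun_prop
  have hsol : ∀ x : ℝ → EuclideanSpace ℝ (Fin n),
      (∀ t ≥ t₀, HasDerivAt x (A t (x t) + f t (x t)) t) →
      (∀ t ≥ t₀, ‖x t‖ ≤ E t * ‖Winv t (x t)‖) ∧
      ContinuousOn (fun t => E t * ‖Winv t (x t)‖) (Ici t₀) ∧
      ∀ t ≥ t₀, LiminfSlopeRightLE (fun t => E t * ‖Winv t (x t)‖) t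
        (Q (E t * ‖Winv t (x t)‖)) := by
    intro x hx
    have hy : ∀ t ≥ t₀, HasDerivAt (fun s => Winv s (x s)) (Winv t (f t (x t))) t :=
      fun t ht => hasDerivAt_inverse_apply
        (hasDerivAt_inverse_of_hasDerivAt (hW_deriv t) hWinv₁ hWinv₂) (hx t ht)
    have hxu : ∀ t ≥ t₀, ‖x t‖ ≤ E t * ‖Winv t (x t)‖ := fun t ht =>
      hWE t ht ▸ norm_le_opNorm_mul_norm_apply_of_comp_eq_id (hWinv₁ t) (x t)
    refine ⟨hxu, fun t ht =>
      ((hE t).continuousAt.mul (hy t ht).continuousAt.norm).continuousWithinAt, fun t ht => ?_⟩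
    rw [hQdef]
    exact liminfSlopeRightLE_mul_norm_le (hE t) (fun _ => (exp_pos _).le) (hy t ht) (hpb t ht)
      (by rw [← hWE t ht, ← hk t]; exact (hkb t ht).2)
      ((hfL t ht _).trans ((hLb t ht _ (norm_nonneg _)).trans (hLhat_mono (hxu t ht))))
  refine ⟨fun x hx hx₀ t ht => ?_, fun x hx => ?_⟩
  · obtain ⟨hxu, hcont, hdini⟩ := hsol x hx
    exact (hxu t ht).trans
      (le_of_liminfSlopeRightLE_of_neg_on_Ioi hcont hdini hQneg (by simpa [E] using hx₀) t ht)
  · obtain ⟨hxu, hcont, hdini⟩ := hsol x hx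
    refine le_of_forall_gt_imp_ge_of_dense fun d' hd' =>
      limsup_le_of_le (isCoboundedUnder_le_of_le atTop fun t => norm_nonneg _) ?_
    filter_upwards [eventually_le_of_liminfSlopeRightLE hcont hdini hQ hQneg hd',
      eventually_ge_atTop t₀] with t hut ht
    exact (hxu t ht).trans hut

/-- Theorem 3, stable fixed point: in the extended-Lipschitz setting with `F ≡ 0`, bounds
`p(t) ≤ p̂ < 0`, `1 ≤ k(t) ≤ k̂`, `L(t,X) ≤ L̂(X)`, if `Q(X) = p̂ X + k̂ L̂(X)` has a stable
positive zero `d` (`Q > 0` on `(0, d)`, `Q < 0` on `(d, ∞)`), then every solution of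
`ẋ = A(t)x + f(t,x)` with `‖(W t₀)⁻¹ x(t₀)‖ ≤ d` stays in norm below `d`, and every
solution satisfies `limsup_{t→∞} ‖x(t)‖ ≤ d`. -/
theorem theorem3_stable_fixed_point
    {n : ℕ} (hn : 1 ≤ n)
    (A : ℝ → (EuclideanSpace ℝ (Fin n) →L[ℝ] EuclideanSpace ℝ (Fin n)))
    (hA : Continuous A)
    (f : ℝ → EuclideanSpace ℝ (Fin n) → EuclideanSpace ℝ (Fin n))
    (hf : Continuous fun q : ℝ × EuclideanSpace ℝ (Fin n) => f q.1 q.2)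
    (W Winv : ℝ → (EuclideanSpace ℝ (Fin n) →L[ℝ] EuclideanSpace ℝ (Fin n)))
    (hWinv₁ : ∀ t, (W t).comp (Winv t) = ContinuousLinearMap.id ℝ (EuclideanSpace ℝ (Fin n)))
    (hWinv₂ : ∀ t, (Winv t).comp (W t) = ContinuousLinearMap.id ℝ (EuclideanSpace ℝ (Fin n)))
    (hWinv_cont : Continuous Winv)
    (hW_deriv : ∀ t, HasDerivAt W ((A t).comp (W t)) t)
    (t₀ : ℝ) (hWnorm : ‖W t₀‖ = 1)
    (p : ℝ → ℝ) (hp : Continuous p)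
    (hWp : ∀ t ≥ t₀, ‖W t‖ = Real.exp (∫ s in t₀..t, p s))
    (k : ℝ → ℝ) (hk : ∀ t, k t = ‖W t‖ * ‖Winv t‖)
    -- extended-Lipschitz setting
    (L : ℝ → ℝ → ℝ) (hL : Continuous fun q : ℝ × ℝ => L q.1 q.2)
    (hL0 : ∀ t, L t 0 = 0)
    (hLmono : ∀ t, Monotone (L t))
    (hLlip : ∀ t, LocallyLipschitz (L t))
    (hfL : ∀ t ≥ t₀, ∀ y : EuclideanSpace ℝ (Fin n), ‖f t y‖ ≤ L t ‖y‖)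
    -- bounds by constants and an autonomous majorant
    (phat khat : ℝ) (hphat : phat < 0) (hkhat : 1 ≤ khat)
    (Lhat : ℝ → ℝ) (hLhat_cont : Continuous Lhat) (hLhat_mono : Monotone Lhat)
    (hLhat_lip : LocallyLipschitz Lhat) (hLhat0 : Lhat 0 = 0)
    (hpb : ∀ t ≥ t₀, p t ≤ phat)
    (hkb : ∀ t ≥ t₀, 1 ≤ k t ∧ k t ≤ khat)
    (hLb : ∀ t ≥ t₀, ∀ X ≥ (0 : ℝ), L t X ≤ Lhat X)
    (Q : ℝ → ℝ) (hQdef : ∀ X, Q X = phat * X + khat * Lhat X)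
    (d : ℝ) (hd : 0 < d)
    (hQroot : Q d = 0)
    (hQpos : ∀ X ∈ Set.Ioo (0 : ℝ) d, 0 < Q X)
    (hQneg : ∀ X > d, Q X < 0) :
    (∀ x : ℝ → EuclideanSpace ℝ (Fin n),
        (∀ t ≥ t₀, HasDerivAt x (A t (x t) + f t (x t)) t) →
        ‖(Winv t₀) (x t₀)‖ ≤ d →
        ∀ t ≥ t₀, ‖x t‖ ≤ d) ∧
      ∀ x : ℝ → EuclideanSpace ℝ (Fin n),
        (∀ t ≥ t₀, HasDerivAt x (A t (x t) + f t (x t)) t) →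
        Filter.limsup (fun t => ‖x t‖) Filter.atTop ≤ d :=
  theorem3_stable_fixed_point_general A f W Winv hWinv₁ hWinv₂ hW_deriv t₀ p hp hWp k hk L hfL phat
    khat Lhat hLhat_cont hLhat_mono hpb hkb hLb Q hQdef d hQneg
end

section
/- (Theorem 4, two simple roots.) In the extended-Lipschitz setting with forcing, suppose p̂ < 0, k̂ ≥ 1, F̂ > 0, L̂ as above satisfy p(t) ≤ p̂, 1 ≤ k(t) ≤ k̂, ‖F t‖ ≤ F̂ and L(t, X) ≤ L̂(X) for all t ≥ t₀, X ≥ 0. Define Q(X) = p̂ X + k̂ (L̂(X) + F̂) and suppose 0 < d₂ < d₁ satisfy Q(d₁) = Q(d₂) = 0, Q(X) > 0 for X ∈ [0, d₂), and Q(X) < 0 for X ∈ (d₂, d₁). Then for every solution x of ẋ = A(t)x + f(t,x) + F(t): (i) if ‖(W t₀)⁻¹ (x t₀)‖ ≤ d₁ then ‖x(t)‖ ≤ d₁ for all t ≥ t₀; (ii) if ‖(W t₀)⁻¹ (x t₀)‖ ≤ d₂ then ‖x(t)‖ ≤ d₂ for all t ≥ t₀; (iii) if ‖(W t₀)⁻¹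 (x t₀)‖ < d₁ then limsup_{t → ∞} ‖x(t)‖ ≤ d₂. -/
/-!
Put `y = W⁻¹ x`. Variation of constants gives `y' = W⁻¹ (f(t, x) + F)`, and since
`‖W‖ ‖W⁻¹‖ ≤ k̂`, the majorant `u = ‖W‖ ‖y‖ = exp (∫ p) ‖y‖ ≥ ‖x‖` satisfies
`u' ≤ p u + k̂ (L̂ u + F̂) ≤ Q(u)`. Comparison with barriers finishes: a level `d` with `Q d ≤ 0`
cannot be crossed upwards (barrier `d + ε e^{(K+1)t}`, with `K` a local Lipschitz constant of `Q`
at `d`), and where `Q ≤ -δ` on a compact part of `(d₂, d₁)` the majorant falls at rate `δ / 2`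
until it is below `d₂ + ε`.
-/

open Set Filter Real

variable {E : Type*} [NormedAddCommGroup E] [NormedSpace ℝ E]

theorem LocallyLipschitz.exists_forall_Icc_le_add_mul_sub {Q : ℝ → ℝ}
    (hQ : LocallyLipschitz Q) (d : ℝ) :
    ∃ K ≥ (0 : ℝ), ∃ ρ > 0, ∀ X ∈ Icc d (d + ρ), Q X ≤ Q d + K * (X - d) := by
  obtain ⟨K, U, hU, hKU⟩ := hQ d
  obtain ⟨r, hr, hrU⟩ := Metric.mem_nhds_iff.1 hU
  refine ⟨K, K.2, r / 2, half_pos hr, fun X hX => ?_⟩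
  have hXU : X ∈ U := hrU <| by
    rw [Metric.mem_ball, Real.dist_eq, abs_of_nonneg (by linarith [hX.1])]
    linarith [hX.2]
  have hdist := hKU.dist_le_mul X hXU d (mem_of_mem_nhds hU)
  rw [Real.dist_eq, Real.dist_eq, abs_of_nonneg (sub_nonneg.2 hX.1)] at hdist
  linarith [le_abs_self (Q X - Q d)]

theorem Filter.limsup_le_of_forall_pos_eventually_le_add {ι : Type*} {l : Filter ι} [l.NeBot]
    {v : ι → ℝ} {b d : ℝ} (hb : ∀ i, b ≤ v i) (h : ∀ ε > 0, ∀ᶠ i in l, v i ≤ d + ε) :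
    limsup v l ≤ d :=
  le_of_forall_pos_le_add fun ε hε => limsup_le_of_le (isCoboundedUnder_le_of_le l hb) (h ε hε)

/-- `u t = exp (P t) * ‖y t‖` satisfies `u' ≤ Q u` in the form needed for comparison arguments,
without `‖y‖` having to be differentiable. -/
structure WeightedSubsolution (Q : ℝ → ℝ) (t₀ : ℝ) (y y' : ℝ → E) (P p : ℝ → ℝ) : Prop where
  hasDerivAt : ∀ t ≥ t₀, HasDerivAt y (y' t) t
  hasDerivAt_weight : ∀ t, HasDerivAt P (p t) t
  exp_mul_norm_deriv_le :
    ∀ t ≥ t₀, ∀ X, exp (P t) * ‖y t‖ ≤ X → exp (P t) * ‖y' t‖ ≤ Q X - p t * X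

namespace WeightedSubsolution

variable {Q : ℝ → ℝ} {t₀ : ℝ} {y y' : ℝ → E} {P p : ℝ → ℝ}

theorem le_of_map_lt_deriv (h : WeightedSubsolution Q t₀ y y' P p) {a b : ℝ} (ha : t₀ ≤ a)
    {φ φ' : ℝ → ℝ} (hφ : ∀ t, HasDerivAt φ (φ' t) t) (hφa : exp (P a) * ‖y a‖ ≤ φ a)
    (hφQ : ∀ t ∈ Ico a b, exp (P t) * ‖y t‖ = φ t → Q (φ t) < φ' t) :
    ∀ t ∈ Icc a b, exp (P t) * ‖y t‖ ≤ φ t := by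
  have hB : ∀ t, HasDerivAt (fun t => exp (-P t) * φ t) (exp (-P t) * (φ' t - p t * φ t)) t :=
    fun t => (((h.hasDerivAt_weight t).neg.exp).mul (hφ t)).congr_deriv
      (by simp only [Pi.neg_apply]; ring)
  have hcont : ContinuousOn y (Icc a b) := fun t ht =>
    (h.hasDerivAt t (ha.trans ht.1)).continuousAt.continuousWithinAt
  have hscale : ∀ t r s, exp (P t) * r ≤ s ↔ r ≤ exp (-P t) * s := fun t r s => by
    rw [exp_neg, le_inv_mul_iff₀ (exp_pos _)]
  intro t ht
  refine (hscale t _ _).2 <| image_norm_le_of_norm_deriv_right_lt_deriv_boundary hcont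
    (fun t ht => (h.hasDerivAt t (ha.trans ht.1)).hasDerivWithinAt)
    ((hscale a _ (φ a)).1 hφa) hB (fun t ht hyt => ?_) ht
  have hut : exp (P t) * ‖y t‖ = φ t := by
    rw [hyt, exp_neg, mul_inv_cancel_left₀ (exp_pos _).ne']
  rw [exp_neg, lt_inv_mul_iff₀ (exp_pos _)]
  have := h.exp_mul_norm_deriv_le t (ha.trans ht.1) (φ t) hut.le
  linarith [hφQ t ht hut]

theorem le_of_map_nonpos (h : WeightedSubsolution Q t₀ y y' P p) (hQ : LocallyLipschitz Q)
    {d s : ℝ} (hd : Q d ≤ 0) (hs : t₀ ≤ s) (hds : exp (P s) * ‖y s‖ ≤ d) :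
    ∀ t ≥ s, exp (P t) * ‖y t‖ ≤ d := by
  intro T hT
  obtain ⟨K, hK, ρ, hρ, hQK⟩ := hQ.exists_forall_Icc_le_add_mul_sub d
  refine le_of_forall_pos_le_add fun η hη => ?_
  -- the barrier `d + ε e^{(K+1)(t-s)}` stays within `ρ` of `d` up to time `T`
  set C := exp ((K + 1) * (T - s))
  set ε := min ρ η / C
  have hε : 0 < ε := div_pos (lt_min hρ hη) (exp_pos _)
  have hεC : ε * C = min ρ η := div_mul_cancel₀ _ (exp_pos _).ne'
  have hφ : ∀ t, HasDerivAt (fun t => d + ε * exp ((K + 1) * (t - s)))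
      (ε * (exp ((K + 1) * (t - s)) * (K + 1))) t := fun t => by
    simpa using ((((hasDerivAt_id t).sub_const s).const_mul (K + 1)).exp.const_mul ε).const_add d
  have hbound : ∀ t ∈ Ico s T, exp (P t) * ‖y t‖ = d + ε * exp ((K + 1) * (t - s)) →
      Q (d + ε * exp ((K + 1) * (t - s))) < ε * (exp ((K + 1) * (t - s)) * (K + 1)) := by
    intro t ht _
    have he : 0 < ε * exp ((K + 1) * (t - s)) := mul_pos hε (exp_pos _)
    have heC : ε * exp ((K + 1) * (t - s)) ≤ ε * C :=
      mul_le_mul_of_nonneg_left (exp_le_exp.2 (by nlinarith [ht.2])) hε.le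
    have := hQK (d + ε * exp ((K + 1) * (t - s)))
      ⟨by linarith, by linarith [min_le_left ρ η]⟩
    nlinarith
  have hφs : exp (P s) * ‖y s‖ ≤ d + ε * exp ((K + 1) * (s - s)) := by
    simp only [sub_self, mul_zero, exp_zero, mul_one]
    linarith
  have := h.le_of_map_lt_deriv hs hφ hφs hbound T ⟨hT, le_rfl⟩
  have : ε * C ≤ η := hεC ▸ min_le_right ρ η
  linarith

theorem exists_le_of_map_neg (h : WeightedSubsolution Q t₀ y y' P p) (hQ : Continuous Q)
    {a c s : ℝ} (hneg : ∀ X ∈ Icc a c, Q X < 0) (hs : t₀ ≤ s)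
    (hcs : exp (P s) * ‖y s‖ ≤ c) : ∃ t ≥ s, exp (P t) * ‖y t‖ ≤ a := by
  by_contra! hgt
  have hac : a ≤ c := (hgt s le_rfl).le.trans hcs
  obtain ⟨m, hm, hmax⟩ := isCompact_Icc.exists_isMaxOn (nonempty_Icc.2 hac) hQ.continuousOn
  set δ := -Q m
  have hδ : 0 < δ := neg_pos.2 (hneg m hm)
  -- the barrier `c - δ (t - s) / 2` reaches `a` at time `T`
  set T := s + 2 * (c - a) / δ
  have hφ : ∀ t, HasDerivAt (fun t => c - δ / 2 * (t - s)) (-(δ / 2)) t := fun t => by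
    simpa using (((hasDerivAt_id t).sub_const s).const_mul (δ / 2)).const_sub c
  have hbound : ∀ t ∈ Ico s T, exp (P t) * ‖y t‖ = c - δ / 2 * (t - s) →
      Q (c - δ / 2 * (t - s)) < -(δ / 2) := by
    intro t ht hut
    have hle : Q (c - δ / 2 * (t - s)) ≤ Q m :=
      hmax ⟨hut ▸ (hgt t ht.1).le, by nlinarith [ht.1]⟩
    linarith
  have hT : s ≤ T := le_add_of_nonneg_right (div_nonneg (by linarith) hδ.le)
  have := h.le_of_map_lt_deriv hs hφ (by simpa using hcs) hbound T ⟨hT, le_rfl⟩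
  have hφT : c - δ / 2 * (T - s) = a := by
    simp only [T]; field_simp; ring
  linarith [hgt T hT]

theorem eventually_le_of_map_neg (h : WeightedSubsolution Q t₀ y y' P p)
    (hQ : LocallyLipschitz Q) {a c s : ℝ} (hneg : ∀ X ∈ Icc a c, Q X < 0) (hac : a ≤ c)
    (hs : t₀ ≤ s) (hcs : exp (P s) * ‖y s‖ ≤ c) :
    ∀ᶠ t in atTop, exp (P t) * ‖y t‖ ≤ a := by
  obtain ⟨t₁, ht₁, hu₁⟩ := h.exists_le_of_map_neg hQ.continuous hneg hs hcs
  exact eventually_atTop.2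
    ⟨t₁, h.le_of_map_nonpos hQ (hneg a ⟨le_rfl, hac⟩).le (hs.trans ht₁) hu₁⟩

theorem eventually_le_add_of_map_neg (h : WeightedSubsolution Q t₀ y y' P p)
    (hQ : LocallyLipschitz Q) {d₁ d₂ : ℝ} (hd : d₂ < d₁) (hneg : ∀ X ∈ Ioo d₂ d₁, Q X < 0)
    (h₀ : exp (P t₀) * ‖y t₀‖ < d₁) {ε : ℝ} (hε : 0 < ε) :
    ∀ᶠ t in atTop, exp (P t) * ‖y t‖ ≤ d₂ + ε := by
  set a := d₂ + min ε ((d₁ - d₂) / 2)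
  have ha : a < d₁ := by linarith [min_le_right ε ((d₁ - d₂) / 2)]
  have hneg' : ∀ X ∈ Icc a (max (exp (P t₀) * ‖y t₀‖) a), Q X < 0 := fun X hX =>
    hneg X ⟨by linarith [hX.1, lt_min hε (half_pos (sub_pos.2 hd))],
      hX.2.trans_lt (max_lt h₀ ha)⟩
  filter_upwards
    [h.eventually_le_of_map_neg hQ hneg' (le_max_right _ _) le_rfl (le_max_left _ _)] with t ht
  linarith [min_le_left ε ((d₁ - d₂) / 2)]

end WeightedSubsolution

theorem norm_le_opNorm_mul_norm_apply_of_comp_eq_id_s15 {w winv : E →L[ℝ] E}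
    (h : w.comp winv = ContinuousLinearMap.id ℝ E) (v : E) : ‖v‖ ≤ ‖w‖ * ‖winv v‖ :=
  calc ‖v‖ = ‖w (winv v)‖ := by rw [← ContinuousLinearMap.comp_apply, h]; rfl
    _ ≤ ‖w‖ * ‖winv v‖ := w.le_opNorm _

section VariationOfConstants

variable [CompleteSpace E] {W Winv : ℝ → E →L[ℝ] E}

theorem HasDerivAt.inverse_of_comp_eq_id {W' : E →L[ℝ] E} {t : ℝ} (hW : HasDerivAt W W' t)
    (h₁ : ∀ s, (W s).comp (Winv s) = ContinuousLinearMap.id ℝ E)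
    (h₂ : ∀ s, (Winv s).comp (W s) = ContinuousLinearMap.id ℝ E) :
    HasDerivAt Winv (-((Winv t).comp (W'.comp (Winv t)))) t := by
  let u : ℝ → (E →L[ℝ] E)ˣ := fun s => ⟨W s, Winv s, h₁ s, h₂ s⟩
  have hWinv : Ring.inverse ∘ W = Winv := funext fun s => Ring.inverse_unit (u s)
  have h := (hasFDerivAt_ringInverse (u t)).comp_hasDerivAt t hW
  rw [hWinv] at h
  simpa [ContinuousLinearMap.mul_def, ContinuousLinearMap.comp_assoc, u] using h

theorem hasDerivAt_inverse_apply_s15 {A : E →L[ℝ] E} {x : ℝ → E} {g : E} {t : ℝ}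
    (hW : HasDerivAt W (A.comp (W t)) t)
    (h₁ : ∀ s, (W s).comp (Winv s) = ContinuousLinearMap.id ℝ E)
    (h₂ : ∀ s, (Winv s).comp (W s) = ContinuousLinearMap.id ℝ E)
    (hx : HasDerivAt x (A (x t) + g) t) :
    HasDerivAt (fun s => Winv s (x s)) (Winv t g) t := by
  refine ((hW.inverse_of_comp_eq_id h₁ h₂).clm_apply hx).congr_deriv ?_
  have hWW : ∀ v, W t (Winv t v) = v := fun v => congrArg (· v) (h₁ t)
  simp [hWW]

theorem weightedSubsolution_inverse_apply {A : ℝ → E →L[ℝ] E} {f : ℝ → E → E} {F : ℝ → E}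
    (h₁ : ∀ t, (W t).comp (Winv t) = ContinuousLinearMap.id ℝ E)
    (h₂ : ∀ t, (Winv t).comp (W t) = ContinuousLinearMap.id ℝ E)
    (hW_deriv : ∀ t, HasDerivAt W ((A t).comp (W t)) t)
    {t₀ : ℝ} {p : ℝ → ℝ} (hp : Continuous p)
    (hWp : ∀ t ≥ t₀, ‖W t‖ = exp (∫ s in t₀..t, p s))
    {L : ℝ → ℝ → ℝ} (hfL : ∀ t ≥ t₀, ∀ y, ‖f t y‖ ≤ L t ‖y‖)
    {phat khat Fhat : ℝ} {Lhat Q : ℝ → ℝ} (hLhat_mono : Monotone Lhat)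
    (hpb : ∀ t ≥ t₀, p t ≤ phat) (hkb : ∀ t ≥ t₀, ‖W t‖ * ‖Winv t‖ ≤ khat)
    (hFb : ∀ t ≥ t₀, ‖F t‖ ≤ Fhat)
    (hLb : ∀ t ≥ t₀, ∀ X ≥ (0 : ℝ), L t X ≤ Lhat X)
    (hQdef : ∀ X, Q X = phat * X + khat * (Lhat X + Fhat))
    {x : ℝ → E} (hx : ∀ t ≥ t₀, HasDerivAt x (A t (x t) + f t (x t) + F t) t) :
    WeightedSubsolution Q t₀ (fun t => Winv t (x t)) (fun t => Winv t (f t (x t) + F t))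
      (fun t => ∫ s in t₀..t, p s) p where
  hasDerivAt t ht :=
    hasDerivAt_inverse_apply_s15 (hW_deriv t) h₁ h₂ (add_assoc (A t (x t)) _ _ ▸ hx t ht)
  hasDerivAt_weight t := (hp.integral_hasStrictDerivAt t₀ t).hasDerivAt
  exp_mul_norm_deriv_le t ht X hX := by
    rw [← hWp t ht] at hX ⊢
    have hxX : ‖x t‖ ≤ X := (norm_le_opNorm_mul_norm_apply_of_comp_eq_id_s15 (h₁ t) _).trans hX
    have hX0 : 0 ≤ X := (norm_nonneg _).trans hxX
    have hfF : ‖f t (x t) + F t‖ ≤ Lhat X + Fhat := calc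
      ‖f t (x t) + F t‖ ≤ L t ‖x t‖ + Fhat :=
        (norm_add_le _ _).trans (add_le_add (hfL t ht _) (hFb t ht))
      _ ≤ Lhat X + Fhat := by
        gcongr; exact (hLb t ht _ (norm_nonneg _)).trans (hLhat_mono hxX)
    have hkhat : 0 ≤ khat := (by positivity : (0 : ℝ) ≤ ‖W t‖ * ‖Winv t‖).trans (hkb t ht)
    calc ‖W t‖ * ‖Winv t (f t (x t) + F t)‖
        ≤ ‖W t‖ * ‖Winv t‖ * ‖f t (x t) + F t‖ := by
          rw [mul_assoc]; gcongr; exact (Winv t).le_opNorm _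
      _ ≤ khat * (Lhat X + Fhat) := mul_le_mul (hkb t ht) hfF (norm_nonneg _) hkhat
      _ = Q X - phat * X := by rw [hQdef]; ring
      _ ≤ Q X - p t * X := by gcongr; exact hpb t ht

end VariationOfConstants

theorem theorem4_two_simple_roots_general
    {n : ℕ}
    (A : ℝ → (EuclideanSpace ℝ (Fin n) →L[ℝ] EuclideanSpace ℝ (Fin n)))
    (f : ℝ → EuclideanSpace ℝ (Fin n) → EuclideanSpace ℝ (Fin n))
    (F : ℝ → EuclideanSpace ℝ (Fin n))
    (W Winv : ℝ → (EuclideanSpace ℝ (Fin n) →L[ℝ] EuclideanSpace ℝ (Fin n)))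
    (hWinv₁ : ∀ t, (W t).comp (Winv t) = ContinuousLinearMap.id ℝ (EuclideanSpace ℝ (Fin n)))
    (hWinv₂ : ∀ t, (Winv t).comp (W t) = ContinuousLinearMap.id ℝ (EuclideanSpace ℝ (Fin n)))
    (hW_deriv : ∀ t, HasDerivAt W ((A t).comp (W t)) t)
    (t₀ : ℝ)
    (p : ℝ → ℝ) (hp : Continuous p)
    (hWp : ∀ t ≥ t₀, ‖W t‖ = Real.exp (∫ s in t₀..t, p s))
    (k : ℝ → ℝ) (hk : ∀ t, k t = ‖W t‖ * ‖Winv t‖)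
    -- extended-Lipschitz setting
    (L : ℝ → ℝ → ℝ)
    (hfL : ∀ t ≥ t₀, ∀ y : EuclideanSpace ℝ (Fin n), ‖f t y‖ ≤ L t ‖y‖)
    -- bounds by constants and an autonomous majorant
    (phat khat Fhat : ℝ)
    (Lhat : ℝ → ℝ) (hLhat_mono : Monotone Lhat)
    (hLhat_lip : LocallyLipschitz Lhat)
    (hpb : ∀ t ≥ t₀, p t ≤ phat)
    (hkb : ∀ t ≥ t₀, 1 ≤ k t ∧ k t ≤ khat)
    (hFb : ∀ t ≥ t₀, ‖F t‖ ≤ Fhat)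
    (hLb : ∀ t ≥ t₀, ∀ X ≥ (0 : ℝ), L t X ≤ Lhat X)
    (Q : ℝ → ℝ) (hQdef : ∀ X, Q X = phat * X + khat * (Lhat X + Fhat))
    (d₁ d₂ : ℝ) (hd : d₂ < d₁)
    (hQroot₁ : Q d₁ = 0) (hQroot₂ : Q d₂ = 0)
    (hQneg : ∀ X ∈ Set.Ioo d₂ d₁, Q X < 0)
    (x : ℝ → EuclideanSpace ℝ (Fin n))
    (hx : ∀ t ≥ t₀, HasDerivAt x (A t (x t) + f t (x t) + F t) t) :
    (‖(Winv t₀) (x t₀)‖ ≤ d₁ → ∀ t ≥ t₀, ‖x t‖ ≤ d₁) ∧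
      (‖(Winv t₀) (x t₀)‖ ≤ d₂ → ∀ t ≥ t₀, ‖x t‖ ≤ d₂) ∧
      (‖(Winv t₀) (x t₀)‖ < d₁ →
        Filter.limsup (fun t => ‖x t‖) Filter.atTop ≤ d₂) := by
  have hsol := weightedSubsolution_inverse_apply hWinv₁ hWinv₂ hW_deriv hp hWp hfL hLhat_mono
    hpb (fun t ht => hk t ▸ (hkb t ht).2) hFb hLb hQdef hx
  have hQ : LocallyLipschitz Q := by
    rw [show Q = _ from funext hQdef]
    exact (lipschitzWith_smul phat).locallyLipschitz.add
      ((lipschitzWith_smul khat).locallyLipschitz.comp (hLhat_lip.add (.const Fhat)))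
  have hxu : ∀ t ≥ t₀, ‖x t‖ ≤ exp (∫ s in t₀..t, p s) * ‖Winv t (x t)‖ := fun t ht =>
    hWp t ht ▸ norm_le_opNorm_mul_norm_apply_of_comp_eq_id_s15 (hWinv₁ t) _
  have hu₀ : exp (∫ s in t₀..t₀, p s) * ‖Winv t₀ (x t₀)‖ = ‖Winv t₀ (x t₀)‖ := by
    simp
  refine ⟨fun h₀ t ht => (hxu t ht).trans
      (hsol.le_of_map_nonpos hQ hQroot₁.le le_rfl (by rwa [hu₀]) t ht),
    fun h₀ t ht => (hxu t ht).trans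
      (hsol.le_of_map_nonpos hQ hQroot₂.le le_rfl (by rwa [hu₀]) t ht),
    fun h₀ => limsup_le_of_forall_pos_eventually_le_add (fun t => norm_nonneg (x t))
      fun ε hε => ?_⟩
  filter_upwards [hsol.eventually_le_add_of_map_neg hQ hd hQneg (by rwa [hu₀]) hε,
    eventually_ge_atTop t₀] with t ht ht₀
  exact (hxu t ht₀).trans ht

/-- Theorem 4, two simple roots: with forcing, bounds `p(t) ≤ p̂ < 0`, `1 ≤ k(t) ≤ k̂`,
`‖F t‖ ≤ F̂`, `L(t,X) ≤ L̂(X)`, let `Q(X) = p̂ X + k̂ (L̂(X) + F̂)` have roots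
`0 < d₂ < d₁` with `Q > 0` on `[0, d₂)` and `Q < 0` on `(d₂, d₁)`. Then solutions of
`ẋ = A(t)x + f(t,x) + F(t)` starting with `‖(W t₀)⁻¹ x(t₀)‖ ≤ dᵢ` stay in norm below
`dᵢ`, and solutions starting with `‖(W t₀)⁻¹ x(t₀)‖ < d₁` satisfy
`limsup_{t→∞} ‖x(t)‖ ≤ d₂`. -/
theorem theorem4_two_simple_roots
    {n : ℕ} (hn : 1 ≤ n)
    (A : ℝ → (EuclideanSpace ℝ (Fin n) →L[ℝ] EuclideanSpace ℝ (Fin n)))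
    (hA : Continuous A)
    (f : ℝ → EuclideanSpace ℝ (Fin n) → EuclideanSpace ℝ (Fin n))
    (hf : Continuous fun q : ℝ × EuclideanSpace ℝ (Fin n) => f q.1 q.2)
    (F : ℝ → EuclideanSpace ℝ (Fin n)) (hF : Continuous F)
    (W Winv : ℝ → (EuclideanSpace ℝ (Fin n) →L[ℝ] EuclideanSpace ℝ (Fin n)))
    (hWinv₁ : ∀ t, (W t).comp (Winv t) = ContinuousLinearMap.id ℝ (EuclideanSpace ℝ (Fin n)))
    (hWinv₂ : ∀ t, (Winv t).comp (W t) = ContinuousLinearMap.id ℝ (EuclideanSpace ℝ (Fin n)))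
    (hWinv_cont : Continuous Winv)
    (hW_deriv : ∀ t, HasDerivAt W ((A t).comp (W t)) t)
    (t₀ : ℝ) (hWnorm : ‖W t₀‖ = 1)
    (p : ℝ → ℝ) (hp : Continuous p)
    (hWp : ∀ t ≥ t₀, ‖W t‖ = Real.exp (∫ s in t₀..t, p s))
    (k : ℝ → ℝ) (hk : ∀ t, k t = ‖W t‖ * ‖Winv t‖)
    -- extended-Lipschitz setting
    (L : ℝ → ℝ → ℝ) (hL : Continuous fun q : ℝ × ℝ => L q.1 q.2)
    (hL0 : ∀ t, L t 0 = 0)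
    (hLmono : ∀ t, Monotone (L t))
    (hLlip : ∀ t, LocallyLipschitz (L t))
    (hfL : ∀ t ≥ t₀, ∀ y : EuclideanSpace ℝ (Fin n), ‖f t y‖ ≤ L t ‖y‖)
    -- bounds by constants and an autonomous majorant
    (phat khat Fhat : ℝ) (hphat : phat < 0) (hkhat : 1 ≤ khat) (hFhat : 0 < Fhat)
    (Lhat : ℝ → ℝ) (hLhat_cont : Continuous Lhat) (hLhat_mono : Monotone Lhat)
    (hLhat_lip : LocallyLipschitz Lhat) (hLhat0 : Lhat 0 = 0)
    (hpb : ∀ t ≥ t₀, p t ≤ phat)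
    (hkb : ∀ t ≥ t₀, 1 ≤ k t ∧ k t ≤ khat)
    (hFb : ∀ t ≥ t₀, ‖F t‖ ≤ Fhat)
    (hLb : ∀ t ≥ t₀, ∀ X ≥ (0 : ℝ), L t X ≤ Lhat X)
    (Q : ℝ → ℝ) (hQdef : ∀ X, Q X = phat * X + khat * (Lhat X + Fhat))
    (d₁ d₂ : ℝ) (hd₂ : 0 < d₂) (hd : d₂ < d₁)
    (hQroot₁ : Q d₁ = 0) (hQroot₂ : Q d₂ = 0)
    (hQpos : ∀ X ∈ Set.Ico (0 : ℝ) d₂, 0 < Q X)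
    (hQneg : ∀ X ∈ Set.Ioo d₂ d₁, Q X < 0)
    (x : ℝ → EuclideanSpace ℝ (Fin n))
    (hx : ∀ t ≥ t₀, HasDerivAt x (A t (x t) + f t (x t) + F t) t) :
    (‖(Winv t₀) (x t₀)‖ ≤ d₁ → ∀ t ≥ t₀, ‖x t‖ ≤ d₁) ∧
      (‖(Winv t₀) (x t₀)‖ ≤ d₂ → ∀ t ≥ t₀, ‖x t‖ ≤ d₂) ∧
      (‖(Winv t₀) (x t₀)‖ < d₁ →
        Filter.limsup (fun t => ‖x t‖) Filter.atTop ≤ d₂) :=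
  theorem4_two_simple_roots_general A f F W Winv hWinv₁ hWinv₂ hW_deriv t₀ p hp hWp k hk L hfL phat
    khat Fhat Lhat hLhat_mono hLhat_lip hpb hkb hFb hLb Q hQdef d₁ d₂ hd hQroot₁ hQroot₂ hQneg x hx
end
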